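/- arXiv:2210.08907 — 3 statements merged into one kernel-verified Lean document; each statement's English description precedes it below -/
import Mathlib

section
/- Let (X_n)_{n∈ℕ₀} be a family of Bernoulli random variables such that P(X_n = 1 | X_{n-1}, ..., X_0) ≥ q almost surely for some q ∈ (0,1) and all n. Then (possibly on an enlarged probability space) there exists an i.i.d. family (X'_n)_{n∈ℕ₀} of Bernoulli random variables with P(X'_n = 1) = q and X_n ≥ X'_n almost surely for every n. -/
open MeasureTheory Set
open scoped ENNReal
namespace Stmt4

noncomputable def nbit (j : ℕ) (u : ℝ) : ℕ := (⌊u * 2 ^ (j+1)⌋ % 2).toNat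

lemma nbit_le_one (j : ℕ) (u : ℝ) : nbit j u ≤ 1 := by unfold nbit; omega

lemma measurable_nbit (j : ℕ) : Measurable (nbit j) := by
  have h1 : Measurable fun u : ℝ => ⌊u * 2 ^ (j+1)⌋ := (measurable_id.mul_const _).floor
  exact (measurable_from_top (f := fun z : ℤ => (z % 2).toNat)).comp h1

lemma nbit_succ (j : ℕ) (u : ℝ) (b : ℤ) : nbit (j+1) u = nbit j (2 * u - b) := by
  unfold nbit
  have h1 : (2*u - b) * 2^(j+1) = u * 2^(j+1+1) - (b*2^(j+1) : ℤ) := by push_cast; ring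
  rw [h1, Int.floor_sub_intCast]
  have : (2:ℤ) ∣ b * 2^(j+1) := ⟨b*2^j, by ring⟩
  omega

lemma nbit_zero {u : ℝ} {b : ℕ} (hb : b ≤ 1) (h1 : (b:ℝ)/2 ≤ u) (h2 : u < ((b:ℝ)+1)/2) :
    nbit 0 u = b := by
  have hf : ⌊u * 2 ^ (0+1)⌋ = (b : ℤ) := by
    rw [Int.floor_eq_iff]
    constructor
    · push_cast; nlinarith
    · push_cast; nlinarith
  unfold nbit
  rw [hf]
  omega

def cylSet (J : Finset ℕ) (ε : ℕ → ℕ) : Set ℝ := {u | ∀ j ∈ J, nbit j u = ε j}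

lemma measurableSet_cylSet (J : Finset ℕ) (ε : ℕ → ℕ) : MeasurableSet (cylSet J ε) := by
  have : cylSet J ε = ⋂ j ∈ J, (nbit j) ⁻¹' {ε j} := by ext u; simp [cylSet]
  rw [this]
  exact MeasurableSet.biInter (J : Set ℕ).to_countable
    (fun j _ => (measurable_nbit j) (measurableSet_singleton _))

lemma vol_cylSet : ∀ (K : ℕ) (J : Finset ℕ), (∀ j ∈ J, j < K) → ∀ (ε : ℕ → ℕ), (∀ j, ε j ≤ 1) →
    volume (cylSet J ε ∩ Ico (0:ℝ) 1) = 2⁻¹ ^ J.card := by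
  intro K
  induction K with
  | zero =>
    intro J hJ ε hε
    have : J = ∅ := Finset.eq_empty_of_forall_notMem (fun j hj => Nat.not_lt_zero j (hJ j hj))
    subst this
    simp [cylSet, Real.volume_Ico]
  | succ K ih =>
    intro J hJ ε hε
    set J' : Finset ℕ := (J.erase 0).image (· - 1) with hJ'def
    have hmemJ' : ∀ i, i ∈ J' ↔ i + 1 ∈ J := by
      intro i
      simp only [hJ'def, Finset.mem_image, Finset.mem_erase]
      constructor
      · rintro ⟨j, ⟨hj0, hjJ⟩, rfl⟩
        have : j - 1 + 1 = j := by omega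
        rwa [this]
      · intro h; exact ⟨i+1, ⟨by omega, h⟩, by omega⟩
    have hJ'lt : ∀ j ∈ J', j < K := by
      intro j hj; have := hJ (j+1) ((hmemJ' j).1 hj); omega
    set ε' : ℕ → ℕ := fun j => ε (j+1) with hε'def
    have hε' : ∀ j, ε' j ≤ 1 := fun j => hε (j+1)
    have hC' := ih J' hJ'lt ε' hε'
    set C' : Set ℝ := cylSet J' ε' ∩ Ico (0:ℝ) 1 with hC'def
    have hC'meas : MeasurableSet C' := (measurableSet_cylSet _ _).inter measurableSet_Ico
    -- half lemma
    have half : ∀ b : ℕ, b ≤ 1 →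
        cylSet J ε ∩ Ico ((b:ℝ)/2) (((b:ℝ)+1)/2) =
          (if 0 ∈ J ∧ ε 0 ≠ b then (∅ : Set ℝ)
           else (fun u : ℝ => 2*u - (b:ℕ)) ⁻¹' C') := by
      intro b hb
      ext u
      by_cases hu : u ∈ Ico ((b:ℝ)/2) (((b:ℝ)+1)/2)
      · have hub : nbit 0 u = b := nbit_zero hb hu.1 hu.2
        have huI : 2*u - (b:ℝ) ∈ Ico (0:ℝ) 1 := by
          obtain ⟨h1, h2⟩ := hu
          constructor <;> [linarith; linarith]
        have hshift : ∀ j : ℕ, nbit (j+1) u = nbit j (2*u - (b:ℝ)) := by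
          intro j
          have := nbit_succ j u (b : ℤ)
          simpa using this
        constructor
        · rintro ⟨hcyl, -⟩
          have h0 : 0 ∈ J → ε 0 = b := fun h0J => by rw [← hcyl 0 h0J, hub]
          have hmem : (2*u - (b:ℝ)) ∈ C' := by
            refine ⟨?_, huI⟩
            intro j hj
            rw [← hshift j]
            exact hcyl (j+1) ((hmemJ' j).1 hj)
          by_cases hcase : 0 ∈ J ∧ ε 0 ≠ b
          · exact absurd (h0 hcase.1) hcase.2
          · simp only [if_neg hcase]; exact hmem
        · intro hmem
          by_cases hcase : 0 ∈ J ∧ ε 0 ≠ b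
          · simp only [if_pos hcase] at hmem; exact absurd hmem (notMem_empty u)
          · simp only [if_neg hcase] at hmem
            refine ⟨?_, hu⟩
            intro j hjJ
            match j with
            | 0 =>
              rw [hub]
              by_contra hne
              exact hcase ⟨hjJ, fun h => hne h.symm⟩
            | (i+1) =>
              rw [hshift i]
              exact hmem.1 i ((hmemJ' i).2 hjJ)
      · constructor
        · rintro ⟨-, h⟩; exact absurd h hu
        · intro hmem
          exfalso
          by_cases hcase : 0 ∈ J ∧ ε 0 ≠ b
          · simp only [if_pos hcase] at hmem; exact hmem
          · simp only [if_neg hcase] at hmem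
            have : (2*u - (b:ℝ)) ∈ Ico (0:ℝ) 1 := hmem.2
            apply hu
            obtain ⟨h1, h2⟩ := this
            constructor <;> [linarith; linarith]
    -- volume of the preimage
    have hpre : ∀ b : ℝ, volume ((fun u : ℝ => 2*u - b) ⁻¹' C') = 2⁻¹ * volume C' := by
      intro b
      have hcomp : (fun u : ℝ => 2*u - b) = (fun v => v + (-b)) ∘ (fun u : ℝ => 2*u) := by
        funext u; simp [Function.comp]; ring
      rw [hcomp, preimage_comp]
      rw [show (fun u : ℝ => 2*u) = ((2:ℝ) * ·) from rfl]
      rw [Real.volume_preimage_mul_left (two_ne_zero) _]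
      rw [measure_preimage_add_right volume (-b) C']
      congr 1
      rw [abs_of_pos (by norm_num : (0:ℝ) < 2⁻¹)]
      rw [ENNReal.ofReal_inv_of_pos (by norm_num : (0:ℝ) < 2)]
      norm_num
    have hcards : (J.erase 0).card = J.card - (if 0 ∈ J then 1 else 0) := by
      by_cases h : 0 ∈ J
      · simp [h, Finset.card_erase_of_mem]
      · simp [h, Finset.erase_eq_of_notMem]
    have hinj : Set.InjOn (· - 1) (J.erase 0 : Set ℕ) := by
      intro a ha b hb hab
      simp only [Finset.coe_erase, Set.mem_diff, Finset.mem_coe, mem_singleton_iff] at ha hb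
      simp only at hab
      omega
    have hcardJ' : J'.card = J.card - (if 0 ∈ J then 1 else 0) := by
      rw [hJ'def, Finset.card_image_of_injOn hinj, hcards]
    have e0 := half 0 (by norm_num)
    have e1 := half 1 (by norm_num)
    norm_num at e0 e1
    have hunion : cylSet J ε ∩ Ico (0:ℝ) 1 =
        (cylSet J ε ∩ Ico (0:ℝ) (1/2)) ∪ (cylSet J ε ∩ Ico (1/2 : ℝ) 1) := by
      rw [← inter_union_distrib_left]
      congr 1
      rw [Set.Ico_union_Ico_eq_Ico] <;> norm_num
    have hdisj : Disjoint (cylSet J ε ∩ Ico (0:ℝ) (1/2)) (cylSet J ε ∩ Ico (1/2 : ℝ) 1) := by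
      rw [Set.disjoint_left]
      rintro x ⟨-, -, h2⟩ ⟨-, h3, -⟩
      linarith
    have hmeas2 : MeasurableSet (cylSet J ε ∩ Ico (1/2 : ℝ) 1) :=
      (measurableSet_cylSet _ _).inter measurableSet_Ico
    rw [hunion, measure_union hdisj hmeas2, e0, e1]
    have hp0 : volume ((fun u : ℝ => 2*u) ⁻¹' C') = 2⁻¹ * volume C' := by
      have hee : (fun u : ℝ => 2*u) = (fun u : ℝ => 2*u - 0) := by funext u; ring
      rw [hee]; exact hpre 0
    have hp1 : volume ((fun u : ℝ => 2*u - 1) ⁻¹' C') = 2⁻¹ * volume C' := hpre 1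
    by_cases h0J : 0 ∈ J
    · have hcard : J'.card = J.card - 1 := by rw [hcardJ']; simp [h0J]
      have hJpos : 1 ≤ J.card := Finset.card_pos.mpr ⟨0, h0J⟩
      have hgoal : (2⁻¹ : ℝ≥0∞) * volume C' = 2⁻¹ ^ J.card := by
        rw [hC', hcard, ← pow_succ']
        congr 1
        omega
      rcases Nat.le_one_iff_eq_zero_or_eq_one.mp (hε 0) with h | h
      · rw [if_neg (by simp [h]), if_pos ⟨h0J, by omega⟩, hp0]
        simpa using hgoal
      · rw [if_pos ⟨h0J, by omega⟩, if_neg (by simp [h]), hp1]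
        simpa using hgoal
    · have hcard : J'.card = J.card := by rw [hcardJ']; simp [h0J]
      rw [if_neg (by tauto), if_neg (by tauto), hp0, hp1, hC', hcard]
      rw [← add_mul, ENNReal.inv_two_add_inv_two, one_mul]

noncomputable def w (j : ℕ) : ℝ := (2⁻¹ : ℝ) ^ (j+1)

lemma w_pos (j : ℕ) : 0 < w j := by rw [w]; positivity

lemma summable_w : Summable w := by
  have := (summable_geometric_of_lt_one (by norm_num : (0:ℝ) ≤ 2⁻¹) (by norm_num)).mul_left 2⁻¹
  convert this using 2 with j
  · rfl
  rw [w, pow_succ']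

lemma tsum_w : ∑' j, w j = 1 := by
  have h := tsum_geometric_of_lt_one (by norm_num : (0:ℝ) ≤ 2⁻¹) (by norm_num)
  have h2 : ∑' j, w j = 2⁻¹ * ∑' j : ℕ, (2⁻¹:ℝ) ^ j := by
    rw [← tsum_mul_left]
    congr 1 with j
    rw [w, pow_succ']
  rw [h2, h]
  norm_num

noncomputable def valSeq (d : ℕ → ℕ) : ℝ := ∑' j, (d j : ℝ) * w j

lemma summable_valSeq {d : ℕ → ℕ} (hd : ∀ j, d j ≤ 1) : Summable (fun j => (d j : ℝ) * w j) := by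
  apply Summable.of_nonneg_of_le (fun j => mul_nonneg (by positivity) (w_pos j).le)
    (fun j => ?_) summable_w
  have : (d j : ℝ) ≤ 1 := by exact_mod_cast hd j
  nlinarith [w_pos j, (w_pos j).le]

lemma valSeq_nonneg {d : ℕ → ℕ} : 0 ≤ valSeq d :=
  tsum_nonneg (fun j => mul_nonneg (by positivity) (w_pos j).le)

lemma valSeq_le_one {d : ℕ → ℕ} (hd : ∀ j, d j ≤ 1) : valSeq d ≤ 1 := by
  rw [valSeq, ← tsum_w]
  apply Summable.tsum_le_tsum _ (summable_valSeq hd) summable_w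
  intro j
  have : (d j : ℝ) ≤ 1 := by exact_mod_cast hd j
  nlinarith [w_pos j]

/-- tail sums -/
noncomputable def tail (d : ℕ → ℕ) (i : ℕ) : ℝ := ∑' j, (d (j + (i+1)) : ℝ) * w (j + (i+1))

lemma summable_shift {d : ℕ → ℕ} (hd : ∀ j, d j ≤ 1) (i : ℕ) :
    Summable (fun j => (d (j + (i+1)) : ℝ) * w (j + (i+1))) := by
  simpa [Function.comp_def] using (summable_valSeq hd).comp_injective (add_left_injective (i+1))

lemma summable_w_shift (i : ℕ) : Summable (fun j => w (j + (i+1))) := by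
  simpa [Function.comp_def] using summable_w.comp_injective (add_left_injective (i+1))

lemma tsum_w_shift (i : ℕ) : ∑' j, w (j + (i+1)) = w i := by
  have : ∀ j, w (j + (i+1)) = (2⁻¹:ℝ)^(i+1) * w j := by
    intro j; rw [w, w]; ring
  calc ∑' j, w (j + (i+1)) = ∑' j, (2⁻¹:ℝ)^(i+1) * w j := by rw [tsum_congr this]
    _ = (2⁻¹:ℝ)^(i+1) * ∑' j, w j := tsum_mul_left
    _ = w i := by rw [tsum_w, w, mul_one]

lemma tail_nonneg {d : ℕ → ℕ} (i : ℕ) : 0 ≤ tail d i :=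
  tsum_nonneg (fun j => mul_nonneg (by positivity) (w_pos _).le)

lemma tail_le {d : ℕ → ℕ} (hd : ∀ j, d j ≤ 1) (i : ℕ) : tail d i ≤ w i := by
  rw [tail, ← tsum_w_shift i]
  apply Summable.tsum_le_tsum _ (summable_shift hd i) (summable_w_shift i)
  intro j
  have : (d (j + (i+1)) : ℝ) ≤ 1 := by exact_mod_cast hd _
  nlinarith [w_pos (j + (i+1))]

lemma valSeq_split {d : ℕ → ℕ} (hd : ∀ j, d j ≤ 1) (i : ℕ) :
    valSeq d = (∑ j ∈ Finset.range (i+1), (d j : ℝ) * w j) + tail d i := by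
  rw [valSeq, tail, ← Summable.sum_add_tsum_nat_add (i+1) (summable_valSeq hd)]

lemma valSeq_sub {d e : ℕ → ℕ} (hd : ∀ j, d j ≤ 1) (he : ∀ j, e j ≤ 1) (i : ℕ)
    (hagree : ∀ j < i, d j = e j) :
    valSeq e - valSeq d = ((e i : ℝ) - d i) * w i + (tail e i - tail d i) := by
  rw [valSeq_split hd i, valSeq_split he i]
  rw [Finset.sum_range_succ, Finset.sum_range_succ]
  have : ∑ j ∈ Finset.range i, (d j : ℝ) * w j = ∑ j ∈ Finset.range i, (e j : ℝ) * w j := by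
    apply Finset.sum_congr rfl
    intro j hj
    rw [hagree j (Finset.mem_range.mp hj)]
  rw [this]
  ring

lemma lex_le {d e : ℕ → ℕ} (hd : ∀ j, d j ≤ 1) (he : ∀ j, e j ≤ 1) (i : ℕ)
    (hagree : ∀ j < i, d j = e j) (hdi : d i = 0) (hei : e i = 1) :
    valSeq d ≤ valSeq e := by
  have h := valSeq_sub hd he i hagree
  rw [hdi, hei] at h
  have h1 := tail_le hd i
  have h2 := tail_nonneg (d := e) i
  simp at h
  linarith

lemma lt_first_disagree {d e : ℕ → ℕ} (hd : ∀ j, d j ≤ 1) (he : ∀ j, e j ≤ 1)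
    (hlt : valSeq d < valSeq e) :
    ∃ i, (∀ j < i, d j = e j) ∧ d i = 0 ∧ e i = 1 := by
  have hne : d ≠ e := by
    intro h; rw [h] at hlt; exact lt_irrefl _ hlt
  have hex : ∃ j, d j ≠ e j := Function.ne_iff.mp hne
  classical
  let i := Nat.find hex
  have hi : d i ≠ e i := Nat.find_spec hex
  have hagree : ∀ j < i, d j = e j := fun j hj => by
    by_contra h
    exact Nat.find_min hex hj h
  refine ⟨i, hagree, ?_⟩
  rcases Nat.le_one_iff_eq_zero_or_eq_one.mp (hd i) with h0 | h1
  · rcases Nat.le_one_iff_eq_zero_or_eq_one.mp (he i) with g0 | g1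
    · exact absurd (h0.trans g0.symm) hi
    · exact ⟨h0, g1⟩
  · rcases Nat.le_one_iff_eq_zero_or_eq_one.mp (he i) with g0 | g1
    · exfalso
      have := lex_le he hd i (fun j hj => (hagree j hj).symm) g0 h1
      linarith
    · exact absurd (h1.trans g1.symm) hi

lemma eq_tail_determined {d e : ℕ → ℕ} (hd : ∀ j, d j ≤ 1) (he : ∀ j, e j ≤ 1) (i : ℕ)
    (hagree : ∀ j < i, d j = e j) (hdi : d i = 0) (hei : e i = 1)
    (heq : valSeq d = valSeq e) :
    ∀ j, i < j → (d j = 1 ∧ e j = 0) := by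
  have h := valSeq_sub hd he i hagree
  rw [hdi, hei, heq] at h
  simp at h
  -- h : 0 = w i + (tail e i - tail d i)
  have h1 := tail_le hd i
  have h2 := tail_nonneg (d := e) i
  have hde : tail d i = w i := by linarith
  have hee : tail e i = 0 := by linarith
  have hd1 : ∀ j, d (j + (i+1)) = 1 := by
    intro j
    by_contra hne
    have hd0 : d (j + (i+1)) = 0 := by have := hd (j + (i+1)); omega
    -- strict: tail d i < w i
    have hstrict : tail d i < w i := by
      rw [tail, ← tsum_w_shift i]
      apply Summable.tsum_lt_tsum (i := j)
      · intro k
        dsimp only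
        have : (d (k + (i+1)) : ℝ) ≤ 1 := by exact_mod_cast hd _
        nlinarith [w_pos (k + (i+1))]
      · rw [hd0]
        simpa using w_pos (j + (i+1))
      · exact summable_shift hd i
      · exact summable_w_shift i
    linarith
  have he0 : ∀ j, e (j + (i+1)) = 0 := by
    intro j
    by_contra hne
    have he1 : e (j + (i+1)) = 1 := by have := he (j + (i+1)); omega
    have hstrict : 0 < tail e i := by
      rw [tail]
      apply Summable.tsum_pos (summable_shift he i) (fun k => mul_nonneg (by positivity) (w_pos _).le) j
      rw [he1]
      simpa using w_pos (j + (i+1))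
    linarith
  intro j hj
  have : j = (j - (i+1)) + (i+1) := by omega
  rw [this]
  exact ⟨hd1 _, he0 _⟩


lemma partial_floor {c : ℝ} (hc : c ∈ Ico (0:ℝ) 1) (k : ℕ) :
    ∑ j ∈ Finset.range k, (nbit j c : ℝ) * w j = (⌊c * 2^k⌋ : ℝ) / 2^k := by
  induction k with
  | zero =>
    have h00 : ⌊c⌋ = 0 := by
      rw [Int.floor_eq_zero_iff]
      exact ⟨hc.1, hc.2⟩
    simp [h00]
  | succ k ih =>
    rw [Finset.sum_range_succ, ih]
    set M := ⌊c * 2^k⌋ with hM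
    have hMle : (M:ℝ) ≤ c * 2^k := Int.floor_le _
    have hMlt : c * 2^k < M + 1 := Int.lt_floor_add_one _
    set N := ⌊c * 2^(k+1)⌋ with hN
    have hpowr : (2:ℝ)^(k+1) = 2 * 2^k := by ring
    have hN1 : (2*M : ℤ) ≤ N := by
      apply Int.le_floor.mpr
      push_cast
      rw [hpowr]
      nlinarith
    have hN2 : N < 2*M + 2 := by
      have : (N:ℝ) < 2*M + 2 := by
        have hNle : (N:ℝ) ≤ c * 2^(k+1) := Int.floor_le _
        rw [hpowr] at hNle
        nlinarith
      exact_mod_cast this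
    have hb : nbit k c = (N % 2).toNat := rfl
    have hsplit : N = 2*M + N % 2 := by omega
    have hcast : ((N % 2).toNat : ℝ) = ((N % 2 : ℤ) : ℝ) := by
      have h0 : (0:ℤ) ≤ N % 2 := by omega
      exact_mod_cast Int.toNat_of_nonneg h0
    have hNr : (N:ℝ) = 2*(M:ℝ) + ((N % 2 : ℤ) : ℝ) := by exact_mod_cast hsplit
    rw [hb, hcast, w, inv_pow, hNr]
    have h2k : (2:ℝ)^k ≠ 0 := by positivity
    have h2k1 : (2:ℝ)^(k+1) ≠ 0 := by positivity
    field_simp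
    ring

lemma valSeq_nbit {c : ℝ} (hc : c ∈ Ico (0:ℝ) 1) : valSeq (fun j => nbit j c) = c := by
  have hb : ∀ j, nbit j c ≤ 1 := fun j => nbit_le_one j c
  have hsum := summable_valSeq hb
  have h1 : Filter.Tendsto (fun k => ∑ j ∈ Finset.range k, (nbit j c : ℝ) * w j)
      Filter.atTop (nhds (valSeq (fun j => nbit j c))) := hsum.hasSum.tendsto_sum_nat
  have h2 : Filter.Tendsto (fun k : ℕ => (⌊c * 2^k⌋ : ℝ) / 2^k) Filter.atTop (nhds c) := by
    apply tendsto_of_tendsto_of_tendsto_of_le_of_le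
      (g := fun k : ℕ => c - (2⁻¹:ℝ)^k) (h := fun _ : ℕ => c)
    · have hp : Filter.Tendsto (fun k : ℕ => (2⁻¹:ℝ)^k) Filter.atTop (nhds 0) :=
        tendsto_pow_atTop_nhds_zero_of_lt_one (by norm_num) (by norm_num)
      simpa using (tendsto_const_nhds (x := c) (f := Filter.atTop)).sub hp
    · exact tendsto_const_nhds
    · intro k
      have hfl : c * 2^k - 1 < (⌊c * 2^k⌋ : ℝ) := Int.sub_one_lt_floor _
      rw [le_div_iff₀ (by positivity : (0:ℝ) < 2^k)]
      have hinv : (2⁻¹:ℝ)^k * 2^k = 1 := by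
        rw [← mul_pow]; norm_num
      nlinarith
    · intro k
      rw [div_le_iff₀ (by positivity : (0:ℝ) < 2^k)]
      exact Int.floor_le _
  have heq : (fun k => ∑ j ∈ Finset.range k, (nbit j c : ℝ) * w j)
      = fun k : ℕ => (⌊c * 2^k⌋ : ℝ) / 2^k := funext (partial_floor hc)
  rw [heq] at h1
  exact tendsto_nhds_unique h1 h2

/-! ### block sequences -/

noncomputable def bseq (n : ℕ) (u : ℝ) : ℕ → ℕ := fun i => nbit (Nat.pair n i) u

lemma bseq_le_one (n : ℕ) (u : ℝ) (i : ℕ) : bseq n u i ≤ 1 := nbit_le_one _ u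

noncomputable def U (n : ℕ) (u : ℝ) : ℝ := valSeq (bseq n u)

lemma block_cyl (n k : ℕ) (d : ℕ → ℕ) :
    {u : ℝ | ∀ i < k, bseq n u i = d i} =
      cylSet ((Finset.range k).image (Nat.pair n)) (fun j => d (Nat.unpair j).2) := by
  ext u
  simp only [cylSet, mem_setOf_eq, Finset.mem_image, Finset.mem_range]
  constructor
  · rintro h j ⟨i, hik, rfl⟩
    rw [Nat.unpair_pair]
    exact h i hik
  · intro h i hik
    have := h (Nat.pair n i) ⟨i, hik, rfl⟩
    rwa [Nat.unpair_pair] at this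

lemma vol_block_cyl (n k : ℕ) (d : ℕ → ℕ) (hd : ∀ i, d i ≤ 1) :
    volume ({u : ℝ | ∀ i < k, bseq n u i = d i} ∩ Ico 0 1) = 2⁻¹ ^ k := by
  rw [block_cyl]
  set J := (Finset.range k).image (Nat.pair n) with hJ
  have hcard : J.card = k := by
    rw [hJ, Finset.card_image_of_injective _ (fun a b hab => (Nat.pair_eq_pair.mp hab).2),
      Finset.card_range]
  rw [← hcard]
  exact vol_cylSet (J.sup id + 1) J
    (fun j hj => Nat.lt_succ_of_le (Finset.le_sup (f := id) hj))
    _ (fun j => hd _)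

lemma null_fixed (n : ℕ) (d : ℕ → ℕ) :
    volume ({u : ℝ | ∀ i, bseq n u i = d i} ∩ Ico 0 1) = 0 := by
  by_cases hd : ∀ i, d i ≤ 1
  · have hle : ∀ k : ℕ, volume ({u : ℝ | ∀ i, bseq n u i = d i} ∩ Ico 0 1) ≤ 2⁻¹ ^ k := by
      intro k
      rw [← vol_block_cyl n k d hd]
      apply measure_mono
      rintro u ⟨h1, h2⟩
      exact ⟨fun i _ => h1 i, h2⟩
    have htend : Filter.Tendsto (fun k : ℕ => (2⁻¹ : ℝ≥0∞) ^ k) Filter.atTop (nhds 0) :=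
      ENNReal.tendsto_pow_atTop_nhds_zero_of_lt_one (by norm_num)
    exact le_antisymm (ge_of_tendsto htend (Filter.Eventually.of_forall hle)) zero_le
  · push_neg at hd
    obtain ⟨i, hi⟩ := hd
    convert measure_empty (μ := (volume : Measure ℝ))
    rw [eq_empty_iff_forall_notMem]
    rintro u ⟨h1, -⟩
    have := bseq_le_one n u i
    have h2 := h1 i
    omega

lemma null_valSeq_eq (n : ℕ) (γ : ℕ → ℕ) (hγ : ∀ j, γ j ≤ 1) :
    volume ({u : ℝ | U n u = valSeq γ} ∩ Ico 0 1) = 0 := by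
  classical
  set δA : ℕ → ℕ → ℕ := fun i j => if j < i then γ j else if j = i then 0 else 1 with hδA
  set δB : ℕ → ℕ → ℕ := fun i j => if j < i then γ j else if j = i then 1 else 0 with hδB
  have hsub : {u : ℝ | U n u = valSeq γ} ⊆
      {u : ℝ | ∀ i, bseq n u i = γ i} ∪
        ⋃ i, ({u : ℝ | ∀ j, bseq n u j = δA i j} ∪ {u : ℝ | ∀ j, bseq n u j = δB i j}) := by
    intro u hu
    simp only [mem_setOf_eq] at hu
    by_cases heq : ∀ i, bseq n u i = γ i
    · exact Or.inl heq
    · right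
      push_neg at heq
      obtain ⟨i0, hi0⟩ := heq
      have hex : ∃ i, bseq n u i ≠ γ i := ⟨i0, hi0⟩
      set i := Nat.find hex with hidef
      have hi : bseq n u i ≠ γ i := Nat.find_spec hex
      have hagree : ∀ j < i, bseq n u j = γ j := fun j hj => by
        by_contra h
        exact Nat.find_min hex hj h
      refine mem_iUnion.mpr ⟨i, ?_⟩
      rcases Nat.le_one_iff_eq_zero_or_eq_one.mp (bseq_le_one n u i) with h0 | h1
      · have hγi : γ i = 1 := by have := hγ i; omega
        have htail := eq_tail_determined (bseq_le_one n u) hγ i hagree h0 hγi hu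
        left
        intro j
        rcases lt_trichotomy j i with hj | hj | hj
        · simp only [hδA, if_pos hj]; exact hagree j hj
        · subst hj; simp only [hδA, if_neg (lt_irrefl _), if_pos rfl]; exact h0
        · have := (htail j hj).1
          simp only [hδA, if_neg (by omega : ¬ j < i), if_neg (by omega : ¬ j = i)]
          exact this
      · have hγi : γ i = 0 := by have := hγ i; omega
        have htail := eq_tail_determined hγ (bseq_le_one n u) i
          (fun j hj => (hagree j hj).symm) hγi h1 hu.symm
        right
        intro j
        rcases lt_trichotomy j i with hj | hj | hj
        · simp only [hδB, if_pos hj]; exact hagree j hj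
        · subst hj; simp only [hδB, if_neg (lt_irrefl _), if_pos rfl]; exact h1
        · have := (htail j hj).2
          simp only [hδB, if_neg (by omega : ¬ j < i), if_neg (by omega : ¬ j = i)]
          exact this
  apply le_antisymm _ zero_le
  calc volume ({u : ℝ | U n u = valSeq γ} ∩ Ico 0 1)
      ≤ volume (({u : ℝ | ∀ i, bseq n u i = γ i} ∪
        ⋃ i, ({u : ℝ | ∀ j, bseq n u j = δA i j} ∪ {u : ℝ | ∀ j, bseq n u j = δB i j})) ∩ Ico 0 1) :=
        measure_mono (inter_subset_inter_left _ hsub)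
    _ = 0 := by
        rw [union_inter_distrib_right, iUnion_inter]
        apply measure_union_null (null_fixed n γ)
        apply measure_iUnion_null
        intro i
        rw [union_inter_distrib_right]
        exact measure_union_null (null_fixed n (δA i)) (null_fixed n (δB i))

lemma measurable_bseq (n i : ℕ) : Measurable (fun u => bseq n u i) := measurable_nbit _

lemma measurableSet_block (n k : ℕ) (d : ℕ → ℕ) :
    MeasurableSet {u : ℝ | ∀ i < k, bseq n u i = d i} := by
  rw [block_cyl]
  exact measurableSet_cylSet _ _

lemma vol_U_lt (n : ℕ) {c : ℝ} (hc : c ∈ Icc (0:ℝ) 1) :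
    volume ({u : ℝ | U n u < c} ∩ Ico 0 1) = ENNReal.ofReal c := by
  classical
  rcases eq_or_lt_of_le hc.2 with h1 | h1
  · subst h1
    have hones : valSeq (fun _ => 1) = 1 := by
      rw [valSeq]
      simpa using tsum_w
    have hnull := null_valSeq_eq n (fun _ => 1) (fun _ => le_refl 1)
    rw [hones] at hnull
    have hsplit : Ico (0:ℝ) 1 =
        ({u : ℝ | U n u < 1} ∩ Ico 0 1) ∪ ({u : ℝ | U n u = 1} ∩ Ico 0 1) := by
      ext u
      simp only [mem_union, mem_inter_iff, mem_setOf_eq]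
      constructor
      · intro hu
        rcases lt_or_eq_of_le (valSeq_le_one (bseq_le_one n u) : U n u ≤ 1) with h | h
        · exact Or.inl ⟨h, hu⟩
        · exact Or.inr ⟨h, hu⟩
      · rintro (⟨-, hu⟩ | ⟨-, hu⟩) <;> exact hu
    have hubd : volume (Ico (0:ℝ) 1) ≤ volume ({u : ℝ | U n u < 1} ∩ Ico 0 1) + 0 := by
      calc volume (Ico (0:ℝ) 1)
          = volume (({u : ℝ | U n u < 1} ∩ Ico 0 1) ∪ ({u : ℝ | U n u = 1} ∩ Ico 0 1)) :=
            congrArg volume hsplit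
        _ ≤ volume ({u : ℝ | U n u < 1} ∩ Ico 0 1) + volume ({u : ℝ | U n u = 1} ∩ Ico 0 1) :=
            measure_union_le _ _
        _ = volume ({u : ℝ | U n u < 1} ∩ Ico 0 1) + 0 := by rw [hnull]
    have hup : volume ({u : ℝ | U n u < 1} ∩ Ico 0 1) ≤ 1 := by
      calc volume ({u : ℝ | U n u < 1} ∩ Ico 0 1) ≤ volume (Ico (0:ℝ) 1) :=
            measure_mono inter_subset_right
        _ = 1 := by rw [Real.volume_Ico]; norm_num
    have hlow : (1:ℝ≥0∞) ≤ volume ({u : ℝ | U n u < 1} ∩ Ico 0 1) := by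
      calc (1:ℝ≥0∞) = volume (Ico (0:ℝ) 1) := by rw [Real.volume_Ico]; norm_num
        _ ≤ _ := by simpa using hubd
    rw [le_antisymm hup hlow]
    simp
  · set γ : ℕ → ℕ := fun j => nbit j c with hγdef
    have hγb : ∀ j, γ j ≤ 1 := fun j => nbit_le_one j c
    have hγv : valSeq γ = c := valSeq_nbit ⟨hc.1, h1⟩
    set δ : ℕ → ℕ → ℕ := fun i j => if j = i then 0 else γ j with hδdef
    have hδb : ∀ i j, δ i j ≤ 1 := by
      intro i j
      simp only [hδdef]
      split
      · omega
      · exact hγb j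
    set L : ℕ → Set ℝ := fun i =>
      if γ i = 1 then {u : ℝ | ∀ j < i + 1, bseq n u j = δ i j} else ∅ with hLdef
    have hLmeas : ∀ i, MeasurableSet (L i) := by
      intro i
      simp only [hLdef]
      split
      · exact measurableSet_block n (i+1) (δ i)
      · exact MeasurableSet.empty
    have hLmem : ∀ i u, u ∈ L i ↔ ((∀ j < i, bseq n u j = γ j) ∧ bseq n u i = 0 ∧ γ i = 1) := by
      intro i u
      simp only [hLdef]
      by_cases hγi : γ i = 1
      · rw [if_pos hγi]
        simp only [mem_setOf_eq]
        constructor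
        · intro h
          refine ⟨fun j hj => ?_, ?_, hγi⟩
          · have := h j (by omega)
            simpa only [hδdef, if_neg (by omega : ¬ j = i)] using this
          · have := h i (by omega)
            simpa only [hδdef, if_pos rfl] using this
        · rintro ⟨ha, h0, -⟩
          intro j hj
          rcases lt_or_eq_of_le (Nat.lt_succ_iff.mp hj) with hji | hji
          · rw [ha j hji]; simp only [hδdef, if_neg (by omega : ¬ j = i)]
          · subst hji; simpa only [hδdef, if_pos rfl] using h0
      · rw [if_neg hγi]
        simp only [mem_empty_iff_false, false_iff]
        rintro ⟨-, -, h⟩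
        exact hγi h
    have hsub1 : {u : ℝ | U n u < c} ⊆ ⋃ i, L i := by
      intro u hu
      rw [mem_setOf_eq, ← hγv] at hu
      obtain ⟨i, ha, h0, h1'⟩ := lt_first_disagree (bseq_le_one n u) hγb hu
      exact mem_iUnion.mpr ⟨i, (hLmem i u).mpr ⟨ha, h0, h1'⟩⟩
    have hsub2 : ∀ i, L i ⊆ {u : ℝ | U n u ≤ c} := by
      intro i u hu
      obtain ⟨ha, h0, h1'⟩ := (hLmem i u).mp hu
      rw [mem_setOf_eq, ← hγv]
      exact lex_le (bseq_le_one n u) hγb i ha h0 h1'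
    have hdisj : Pairwise (Function.onFun Disjoint fun i => L i ∩ Ico 0 1) := by
      intro i i' hne
      rw [Function.onFun, Set.disjoint_left]
      rintro u ⟨hu, -⟩ ⟨hu', -⟩
      obtain ⟨ha, h0, hγ1⟩ := (hLmem i u).mp hu
      obtain ⟨ha', h0', hγ1'⟩ := (hLmem i' u).mp hu'
      rcases lt_or_gt_of_ne hne with h | h
      · have := ha' i h
        omega
      · have := ha i' h
        omega
    have hLvol : ∀ i, volume (L i ∩ Ico 0 1) =
        if γ i = 1 then (2⁻¹:ℝ≥0∞) ^ (i+1) else 0 := by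
      intro i
      by_cases hγi : γ i = 1
      · rw [if_pos hγi]
        have hLi : L i = {u : ℝ | ∀ j < i + 1, bseq n u j = δ i j} := by
          simp only [hLdef, if_pos hγi]
        rw [hLi]
        have : (fun j => if j < i + 1 then δ i j else δ i j) = δ i := by funext j; simp
        rw [vol_block_cyl n (i+1) (δ i) (hδb i)]
      · rw [if_neg hγi]
        have hLi : L i = ∅ := by simp only [hLdef, if_neg hγi]
        rw [hLi]
        simp
    have hsum : ∑' i, volume (L i ∩ Ico 0 1) = ENNReal.ofReal c := by
      conv_rhs => rw [← hγv]
      rw [valSeq, ENNReal.ofReal_tsum_of_nonneg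
        (fun j => mul_nonneg (by positivity) (w_pos _).le) (summable_valSeq hγb)]
      apply tsum_congr
      intro i
      rw [hLvol i]
      rcases Nat.le_one_iff_eq_zero_or_eq_one.mp (hγb i) with h | h
      · rw [h, if_neg (by omega)]
        simp
      · rw [h, if_pos rfl]
        rw [Nat.cast_one, one_mul, w, ENNReal.ofReal_pow (by norm_num)]
        congr 1
        rw [ENNReal.ofReal_inv_of_pos (by norm_num)]
        norm_num
    have hUnion : volume ((⋃ i, L i) ∩ Ico 0 1) = ENNReal.ofReal c := by
      rw [iUnion_inter, measure_iUnion hdisj (fun i => (hLmeas i).inter measurableSet_Ico)]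
      exact hsum
    have hnull := null_valSeq_eq n γ hγb
    rw [hγv] at hnull
    apply le_antisymm
    · calc volume ({u : ℝ | U n u < c} ∩ Ico 0 1)
          ≤ volume ((⋃ i, L i) ∩ Ico 0 1) :=
            measure_mono (inter_subset_inter_left _ hsub1)
        _ = ENNReal.ofReal c := hUnion
    · rw [← hUnion]
      calc volume ((⋃ i, L i) ∩ Ico 0 1)
          ≤ volume (({u : ℝ | U n u < c} ∩ Ico 0 1) ∪ ({u : ℝ | U n u = c} ∩ Ico 0 1)) := by
            apply measure_mono
            rintro u ⟨hu, huI⟩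
            obtain ⟨i, hi⟩ := mem_iUnion.mp hu
            have hle2 : U n u ≤ c := hsub2 i hi
            rcases lt_or_eq_of_le hle2 with h | h
            · exact Or.inl ⟨h, huI⟩
            · exact Or.inr ⟨h, huI⟩
        _ ≤ volume ({u : ℝ | U n u < c} ∩ Ico 0 1) + volume ({u : ℝ | U n u = c} ∩ Ico 0 1) :=
            measure_union_le _ _
        _ = volume ({u : ℝ | U n u < c} ∩ Ico 0 1) := by rw [hnull, add_zero]

/-! ### block σ-algebras and independence -/

open ProbabilityTheory

def blockPi (n : ℕ) : Set (Set ℝ) :=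
  {S | ∃ (F : Finset ℕ) (ε : ℕ → ℕ), (∀ i, ε i ≤ 1) ∧ S = {u : ℝ | ∀ i ∈ F, bseq n u i = ε i}}

def blockM (n : ℕ) : MeasurableSpace ℝ := MeasurableSpace.generateFrom (blockPi n)

noncomputable def nu0 : Measure ℝ := volume.restrict (Ico 0 1)

instance : IsProbabilityMeasure nu0 :=
  ⟨by rw [nu0, Measure.restrict_apply MeasurableSet.univ, univ_inter, Real.volume_Ico]; norm_num⟩

lemma measurableSet_of_blockPi {n : ℕ} {S : Set ℝ} (h : S ∈ blockPi n) : MeasurableSet S := by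
  obtain ⟨F, ε, -, rfl⟩ := h
  have : {u : ℝ | ∀ i ∈ F, bseq n u i = ε i} = ⋂ i ∈ F, (fun u => bseq n u i) ⁻¹' {ε i} := by
    ext u; simp
  rw [this]
  exact MeasurableSet.biInter (F : Set ℕ).to_countable
    (fun i _ => (measurable_bseq n i) (measurableSet_singleton _))

lemma blockM_le (n : ℕ) : blockM n ≤ (inferInstance : MeasurableSpace ℝ) :=
  MeasurableSpace.generateFrom_le fun _ h => measurableSet_of_blockPi h

lemma isPiSystem_blockPi (n : ℕ) : IsPiSystem (blockPi n) := by
  rintro S ⟨F, ε, hε, rfl⟩ T ⟨G, θ, hθ, rfl⟩ hne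
  obtain ⟨u0, hu0S, hu0T⟩ := hne
  simp only [mem_setOf_eq] at hu0S hu0T
  refine ⟨F ∪ G, fun i => if i ∈ F then ε i else θ i,
    fun i => by dsimp only; split <;> [exact hε i; exact hθ i], ?_⟩
  ext u
  simp only [mem_inter_iff, mem_setOf_eq, Finset.mem_union]
  constructor
  · rintro ⟨h1, h2⟩ i hi
    by_cases hiF : i ∈ F
    · rw [if_pos hiF]; exact h1 i hiF
    · rw [if_neg hiF]; exact h2 i (hi.resolve_left hiF)
  · intro h
    constructor
    · intro i hi
      have := h i (Or.inl hi)
      rwa [if_pos hi] at this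
    · intro i hi
      have := h i (Or.inr hi)
      by_cases hiF : i ∈ F
      · rw [if_pos hiF] at this
        rw [this, ← hu0S i hiF, hu0T i hi]
      · rwa [if_neg hiF] at this

lemma block_cylF (n : ℕ) (F : Finset ℕ) (ε : ℕ → ℕ) :
    {u : ℝ | ∀ i ∈ F, bseq n u i = ε i} =
      cylSet (F.image (Nat.pair n)) (fun j => ε (Nat.unpair j).2) := by
  ext u
  simp only [cylSet, mem_setOf_eq, Finset.mem_image]
  constructor
  · rintro h j ⟨i, hi, rfl⟩
    rw [Nat.unpair_pair]
    exact h i hi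
  · intro h i hi
    have := h (Nat.pair n i) ⟨i, hi, rfl⟩
    rwa [Nat.unpair_pair] at this

lemma nu0_blockCyl (n : ℕ) (F : Finset ℕ) (ε : ℕ → ℕ) (hε : ∀ i, ε i ≤ 1) :
    nu0 {u : ℝ | ∀ i ∈ F, bseq n u i = ε i} = 2⁻¹ ^ F.card := by
  rw [nu0, Measure.restrict_apply (measurableSet_of_blockPi ⟨F, ε, hε, rfl⟩)]
  rw [block_cylF]
  have hcard : (F.image (Nat.pair n)).card = F.card :=
    Finset.card_image_of_injective _ (fun a b hab => (Nat.pair_eq_pair.mp hab).2)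
  rw [← hcard]
  exact vol_cylSet ((F.image (Nat.pair n)).sup id + 1) _
    (fun j hj => Nat.lt_succ_of_le (Finset.le_sup (f := id) hj)) _ (fun j => hε _)

lemma iIndepSets_blockPi : iIndepSets blockPi nu0 := by
  classical
  rw [iIndepSets_iff]
  intro SS f hf
  choose! F ε hε hfeq using hf
  have hJ : (⋂ i ∈ SS, f i) =
      {u : ℝ | ∀ j ∈ SS.biUnion (fun m => (F m).image (Nat.pair m)),
        nbit j u = min (ε (Nat.unpair j).1 (Nat.unpair j).2) 1} := by
    ext u
    simp only [mem_iInter, mem_setOf_eq, Finset.mem_biUnion, Finset.mem_image]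
    constructor
    · rintro h j ⟨m, hm, i, hi, rfl⟩
      rw [Nat.unpair_pair]
      have hu := h m hm
      rw [hfeq m hm] at hu
      have := hu i hi
      rw [min_eq_left (hε m hm i)]
      exact this
    · intro h m hm
      rw [hfeq m hm]
      intro i hi
      have := h (Nat.pair m i) ⟨m, hm, i, hi, rfl⟩
      rw [Nat.unpair_pair, min_eq_left (hε m hm i)] at this
      exact this
  have hdisjIm : (SS : Set ℕ).PairwiseDisjoint (fun m => (F m).image (Nat.pair m)) := by
    intro a ha b hb hab
    simp only [Function.onFun]
    rw [Finset.disjoint_left]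
    rintro j hja hjb
    obtain ⟨i, -, rfl⟩ := Finset.mem_image.mp hja
    obtain ⟨i', -, he⟩ := Finset.mem_image.mp hjb
    exact hab ((Nat.pair_eq_pair.mp he).1).symm
  have hcard : (SS.biUnion (fun m => (F m).image (Nat.pair m))).card
      = ∑ m ∈ SS, (F m).card := by
    rw [Finset.card_biUnion hdisjIm]
    exact Finset.sum_congr rfl fun m _ =>
      Finset.card_image_of_injective _ (fun a b hab => (Nat.pair_eq_pair.mp hab).2)
  have hE : ∀ j, min (ε (Nat.unpair j).1 (Nat.unpair j).2) 1 ≤ 1 := fun j => min_le_right _ _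
  have hvol : nu0 (⋂ i ∈ SS, f i) = 2⁻¹ ^ (∑ m ∈ SS, (F m).card) := by
    rw [hJ, ← hcard]
    set J := SS.biUnion (fun m => (F m).image (Nat.pair m))
    have hcylmeas : MeasurableSet
        {u : ℝ | ∀ j ∈ J, nbit j u = min (ε (Nat.unpair j).1 (Nat.unpair j).2) 1} := by
      have hrw : {u : ℝ | ∀ j ∈ J, nbit j u = min (ε (Nat.unpair j).1 (Nat.unpair j).2) 1}
          = cylSet J (fun j => min (ε (Nat.unpair j).1 (Nat.unpair j).2) 1) := rfl
      rw [hrw]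
      exact measurableSet_cylSet _ _
    rw [nu0, Measure.restrict_apply hcylmeas]
    exact vol_cylSet (J.sup id + 1) J
      (fun j hj => Nat.lt_succ_of_le (Finset.le_sup (f := id) hj)) _ hE
  rw [hvol]
  have hprod : ∀ m ∈ SS, nu0 (f m) = 2⁻¹ ^ (F m).card := by
    intro m hm
    rw [hfeq m hm]
    exact nu0_blockCyl m (F m) (ε m) (hε m hm)
  rw [Finset.prod_congr rfl hprod, Finset.prod_pow_eq_pow_sum]

lemma iIndep_blockM : iIndep blockM nu0 :=
  iIndepSets.iIndep (m := blockM) blockM_le blockPi isPiSystem_blockPi (fun _ => rfl)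
    iIndepSets_blockPi

lemma measurable_blockM_bseq (n i : ℕ) : Measurable[blockM n] (fun u => bseq n u i) := by
  apply @measurable_to_countable' ℕ ℝ _ _ (blockM n) _
  intro c
  by_cases hc : c ≤ 1
  · have hrw : (fun u => bseq n u i) ⁻¹' {c} = {u : ℝ | ∀ t ∈ ({i} : Finset ℕ), bseq n u t = c} := by
      ext u; simp
    rw [hrw]
    exact MeasurableSpace.measurableSet_generateFrom ⟨{i}, fun _ => c, fun _ => hc, rfl⟩
  · have hrw : (fun u => bseq n u i) ⁻¹' {c} = ∅ := by
      ext u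
      simp only [mem_preimage, mem_singleton_iff, mem_empty_iff_false, iff_false]
      have := bseq_le_one n u i
      omega
    rw [hrw]
    exact @MeasurableSet.empty _ (blockM n)

lemma measurable_blockM_U (n : ℕ) : Measurable[blockM n] (U n) := by
  have hpart : ∀ k : ℕ, Measurable[blockM n]
      (fun u => ∑ j ∈ Finset.range k, (bseq n u j : ℝ) * w j) := by
    intro k
    apply Finset.measurable_sum
    intro j _
    exact (((measurable_from_top (f := fun m : ℕ => (m : ℝ))).comp
      (measurable_blockM_bseq n j)).mul_const (w j))
  have htend : Filter.Tendsto (fun k => fun u => ∑ j ∈ Finset.range k, (bseq n u j : ℝ) * w j)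
      Filter.atTop (nhds (U n)) := by
    rw [tendsto_pi_nhds]
    intro u
    exact (summable_valSeq (bseq_le_one n u)).hasSum.tendsto_sum_nat
  exact @measurable_of_tendsto_metrizable ℝ ℝ (blockM n) _ _ _ _ _ _ hpart htend

lemma measurable_U (n : ℕ) : Measurable (U n) :=
  (measurable_blockM_U n).mono (blockM_le n) le_rfl

lemma measurableSet_U_lt (n : ℕ) (c : ℝ) : MeasurableSet[blockM n] {u : ℝ | U n u < c} :=
  (measurable_blockM_U n) measurableSet_Iio

lemma nu0_U_lt (n : ℕ) {c : ℝ} (hc : c ∈ Icc (0:ℝ) 1) :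
    nu0 {u : ℝ | U n u < c} = ENNReal.ofReal c := by
  rw [nu0, Measure.restrict_apply
    (show MeasurableSet {u : ℝ | U n u < c} from (measurable_U n) measurableSet_Iio)]
  exact vol_U_lt n hc

lemma nu0_iInter_U_lt (SS : Finset ℕ) (r : ℕ → ℝ) (hr : ∀ n ∈ SS, r n ∈ Icc (0:ℝ) 1) :
    nu0 (⋂ n ∈ SS, {u : ℝ | U n u < r n}) = ∏ n ∈ SS, ENNReal.ofReal (r n) := by
  rw [iIndep_blockM.meas_biInter (fun n _ => measurableSet_U_lt n (r n))]
  exact Finset.prod_congr rfl fun n hn => nu0_U_lt n (hr n hn)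

/-! ### path space: patterns and conditional probabilities -/

section Path

def bval (b : Bool) : ℝ := if b then 1 else 0

def patSet {M : ℕ} (s : Fin M → Bool) : Set (ℕ → ℝ) := {x | ∀ i : Fin M, x (i : ℕ) = bval (s i)}

lemma measurableSet_patSet {M : ℕ} (s : Fin M → Bool) : MeasurableSet (patSet s) := by
  have hrw : patSet s = ⋂ i : Fin M, (fun x : ℕ → ℝ => x (i:ℕ)) ⁻¹' {bval (s i)} := by
    ext x; simp [patSet]
  rw [hrw]
  exact MeasurableSet.iInter fun i => (measurable_pi_apply _) (measurableSet_singleton _)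

lemma patSet_disjoint {M : ℕ} {s t : Fin M → Bool} (hst : s ≠ t) :
    Disjoint (patSet s) (patSet t) := by
  rw [Set.disjoint_left]
  intro x hxs hxt
  apply hst
  funext i
  have h1 := hxs i
  have h2 := hxt i
  rw [h1] at h2
  rcases Bool.eq_false_or_eq_true (s i) with h | h <;>
    rcases Bool.eq_false_or_eq_true (t i) with h' | h' <;>
      rw [h, h'] <;> rw [h, h'] at h2 <;> simp [bval] at h2 ⊢

variable (μX : Measure (ℕ → ℝ))

noncomputable def cpat (M : ℕ) (s : Fin M → Bool) : ℝ :=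
  if μX (patSet s) = 0 then 1
  else (μX (patSet s ∩ {x | x M = 1})).toReal / (μX (patSet s)).toReal

variable [IsProbabilityMeasure μX] {q : ℝ}

lemma cpat_mem (hq : q ∈ Set.Ioo (0:ℝ) 1)
    (hlb : ∀ (M : ℕ) (s : Fin M → Bool),
      ENNReal.ofReal q * μX (patSet s) ≤ μX (patSet s ∩ {x | x M = 1}))
    (M : ℕ) (s : Fin M → Bool) : cpat μX M s ∈ Set.Icc q 1 := by
  rw [cpat]
  split_ifs with h
  · exact ⟨hq.2.le, le_refl 1⟩
  · have hfin : μX (patSet s) ≠ ⊤ := measure_ne_top _ _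
    have hfin2 : μX (patSet s ∩ {x | x (M:ℕ) = 1}) ≠ ⊤ := measure_ne_top _ _
    have hpos : 0 < (μX (patSet s)).toReal := ENNReal.toReal_pos h hfin
    constructor
    · rw [le_div_iff₀ hpos]
      have h2 : (ENNReal.ofReal q * μX (patSet s)).toReal ≤
          (μX (patSet s ∩ {x | x (M:ℕ) = 1})).toReal :=
        ENNReal.toReal_mono hfin2 (hlb M s)
      rwa [ENNReal.toReal_mul, ENNReal.toReal_ofReal hq.1.le] at h2
    · rw [div_le_one hpos]
      exact ENNReal.toReal_mono hfin (measure_mono inter_subset_left)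

lemma cpat_mul (M : ℕ) (s : Fin M → Bool) :
    μX (patSet s ∩ {x | x (M:ℕ) = 1}) = ENNReal.ofReal (cpat μX M s) * μX (patSet s) := by
  rw [cpat]
  split_ifs with h
  · rw [h, mul_zero]
    exact le_antisymm (h ▸ measure_mono inter_subset_left) zero_le
  · have hfin : μX (patSet s) ≠ ⊤ := measure_ne_top _ _
    have hfin2 : μX (patSet s ∩ {x | x (M:ℕ) = 1}) ≠ ⊤ := measure_ne_top _ _
    rw [ENNReal.ofReal_div_of_pos (ENNReal.toReal_pos h hfin),
      ENNReal.ofReal_toReal hfin2, ENNReal.ofReal_toReal hfin]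
    rw [ENNReal.div_mul_cancel h hfin]

noncomputable def pfun (M : ℕ) (x : ℕ → ℝ) : ℝ :=
  1 - ∑ s : Fin M → Bool, Set.indicator (patSet s) (fun _ => 1 - cpat μX M s) x

lemma measurable_pfun (M : ℕ) : Measurable (pfun μX M) := by
  apply Measurable.const_sub
  apply Finset.measurable_sum
  intro s _
  exact measurable_const.indicator (measurableSet_patSet s)

lemma pfun_eq_on {M : ℕ} {s : Fin M → Bool} {x : ℕ → ℝ} (hx : x ∈ patSet s) :
    pfun μX M x = cpat μX M s := by
  classical
  rw [pfun]
  have hsum : ∑ t : Fin M → Bool, Set.indicator (patSet t) (fun _ => 1 - cpat μX M t) x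
      = 1 - cpat μX M s := by
    rw [Finset.sum_eq_single s]
    · rw [Set.indicator_of_mem hx]
    · intro t _ hts
      rw [Set.indicator_of_notMem]
      intro hxt
      exact (Set.disjoint_left.mp (patSet_disjoint hts) hxt) hx
    · intro h
      exact absurd (Finset.mem_univ s) h
  rw [hsum]
  ring

lemma pfun_mem (hq : q ∈ Set.Ioo (0:ℝ) 1)
    (hlb : ∀ (M : ℕ) (s : Fin M → Bool),
      ENNReal.ofReal q * μX (patSet s) ≤ μX (patSet s ∩ {x | x M = 1}))
    (M : ℕ) (x : ℕ → ℝ) : pfun μX M x ∈ Set.Icc q 1 := by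
  classical
  by_cases hex : ∃ s : Fin M → Bool, x ∈ patSet s
  · obtain ⟨s, hs⟩ := hex
    rw [pfun_eq_on μX hs]
    exact cpat_mem μX hq hlb M s
  · push_neg at hex
    have hzero : ∀ s : Fin M → Bool, Set.indicator (patSet s) (fun _ => 1 - cpat μX M s) x = 0 :=
      fun s => Set.indicator_of_notMem (hex s) _
    rw [pfun]
    rw [Finset.sum_congr rfl (fun s _ => hzero s), Finset.sum_const_zero]
    norm_num
    exact hq.2.le

end Path

/-! ### the product space and the key computation -/

set_option linter.unusedSectionVars false

section Main

variable (μX : Measure (ℕ → ℝ)) [IsProbabilityMeasure μX] (q : ℝ)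

noncomputable def muP : Measure ((ℕ → ℝ) × ℝ) := μX.prod nu0

instance : IsProbabilityMeasure (muP μX) := by rw [muP]; infer_instance

def TT (n : ℕ) : Set ((ℕ → ℝ) × ℝ) := {z | z.1 n = 1 ∧ U n z.2 < q / pfun μX n z.1}

lemma measurableSet_TT (n : ℕ) : MeasurableSet (TT μX q n) := by
  have hrw : TT μX q n = ((fun z : (ℕ → ℝ) × ℝ => z.1 n) ⁻¹' {1}) ∩
      {z : (ℕ → ℝ) × ℝ | U n z.2 < q / pfun μX n z.1} := by
    ext z; simp [TT]
  rw [hrw]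
  apply MeasurableSet.inter
  · exact ((measurable_pi_apply n).comp measurable_fst) (measurableSet_singleton _)
  · exact measurableSet_lt ((measurable_U n).comp measurable_snd)
      (measurable_const.div ((measurable_pfun μX n).comp measurable_fst))

lemma supp_pat (hsupp : ∀ n, μX {x | x n = 0 ∨ x n = 1} = 1) (M : ℕ) :
    μX (⋃ s : Fin M → Bool, patSet s) = 1 := by
  classical
  have hmeasA : ∀ n : ℕ, MeasurableSet {x : ℕ → ℝ | x n = 0 ∨ x n = 1} := by
    intro n
    have hrw : {x : ℕ → ℝ | x n = 0 ∨ x n = 1}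
        = (fun x : ℕ → ℝ => x n) ⁻¹' {0} ∪ (fun x : ℕ → ℝ => x n) ⁻¹' {1} := by
      ext x; simp
    rw [hrw]
    exact ((measurable_pi_apply n) (measurableSet_singleton _)).union
      ((measurable_pi_apply n) (measurableSet_singleton _))
  have hsub : (⋂ i : Fin M, {x : ℕ → ℝ | x (i:ℕ) = 0 ∨ x (i:ℕ) = 1}) ⊆
      ⋃ s : Fin M → Bool, patSet s := by
    intro x hx
    simp only [mem_iInter, mem_setOf_eq] at hx
    refine mem_iUnion.mpr ⟨fun i => if x (i:ℕ) = 1 then true else false, fun i => ?_⟩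
    show x (i:ℕ) = bval (if x (i:ℕ) = 1 then true else false)
    rcases hx i with h | h
    · have hne : ¬ x (i:ℕ) = 1 := by rw [h]; norm_num
      rw [if_neg hne, bval]
      simpa using h
    · rw [if_pos h, bval]
      simpa using h
  have hinter : μX (⋂ i : Fin M, {x : ℕ → ℝ | x (i:ℕ) = 0 ∨ x (i:ℕ) = 1}) = 1 := by
    have hc : μX (⋂ i : Fin M, {x : ℕ → ℝ | x (i:ℕ) = 0 ∨ x (i:ℕ) = 1})ᶜ = 0 := by
      rw [compl_iInter]
      apply measure_iUnion_null
      intro i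
      have hcc := measure_compl (hmeasA (i:ℕ)) (measure_ne_top μX _)
      rw [hsupp (i:ℕ), measure_univ] at hcc
      rw [hcc]
      simp
    have hball := measure_add_measure_compl
      (μ := μX) (MeasurableSet.iInter fun i : Fin M => hmeasA (i:ℕ))
    rw [hc, add_zero, measure_univ] at hball
    exact hball
  have h1 : (1:ℝ≥0∞) ≤ μX (⋃ s : Fin M → Bool, patSet s) := hinter ▸ measure_mono hsub
  exact le_antisymm prob_le_one h1

lemma decomp (hsupp : ∀ n, μX {x | x n = 0 ∨ x n = 1} = 1) (M : ℕ)
    (W : Set ((ℕ → ℝ) × ℝ)) (hW : MeasurableSet W) :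
    muP μX W = ∑ s : Fin M → Bool, muP μX (W ∩ (patSet s ×ˢ (univ : Set ℝ))) := by
  classical
  set V : Set ((ℕ → ℝ) × ℝ) := (⋃ s : Fin M → Bool, patSet s) ×ˢ (univ : Set ℝ) with hV
  have hVmeas : MeasurableSet V :=
    (MeasurableSet.iUnion fun s => measurableSet_patSet s).prod MeasurableSet.univ
  have hVc : muP μX Vᶜ = 0 := by
    have hVc' : Vᶜ = ((⋃ s : Fin M → Bool, patSet s)ᶜ) ×ˢ (univ : Set ℝ) := by
      ext z; simp [hV]
    rw [hVc', muP, Measure.prod_prod]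
    rw [measure_compl (MeasurableSet.iUnion fun s => measurableSet_patSet s) (measure_ne_top μX _),
      supp_pat μX hsupp M, measure_univ]
    simp
  have hWV : muP μX W = muP μX (W ∩ V) := by
    apply le_antisymm _ (measure_mono inter_subset_left)
    calc muP μX W = muP μX (W ∩ V) + muP μX (W \ V) := (measure_inter_add_diff W hVmeas).symm
      _ ≤ muP μX (W ∩ V) + muP μX Vᶜ := by
          apply add_le_add_right
          exact measure_mono fun z hz => hz.2
      _ = muP μX (W ∩ V) := by rw [hVc, add_zero]
  rw [hWV]
  have hunion : W ∩ V = ⋃ s : Fin M → Bool, (W ∩ (patSet s ×ˢ (univ : Set ℝ))) := by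
    rw [hV, iUnion_prod_const, inter_iUnion]
  rw [hunion, measure_iUnion ?_ (fun s => hW.inter ((measurableSet_patSet s).prod .univ))]
  · exact tsum_fintype _
  · intro s t hst
    simp only [Function.onFun]
    apply Disjoint.mono inter_subset_right inter_subset_right
    rw [Set.disjoint_left]
    rintro ⟨x, u⟩ ⟨hx, -⟩ ⟨hx', -⟩
    exact Set.disjoint_left.mp (patSet_disjoint hst) hx hx'

lemma key_induction (hsupp : ∀ n, μX {x | x n = 0 ∨ x n = 1} = 1)
    (hq : q ∈ Set.Ioo (0:ℝ) 1)
    (hlb : ∀ (M : ℕ) (s : Fin M → Bool),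
      ENNReal.ofReal q * μX (patSet s) ≤ μX (patSet s ∩ {x | x M = 1})) :
    ∀ (M : ℕ) (SS : Finset ℕ), (∀ n ∈ SS, n < M) →
      muP μX (⋂ n ∈ SS, TT μX q n) = ENNReal.ofReal q ^ SS.card := by
  intro M
  induction M with
  | zero =>
    intro SS hSS
    have hSSe : SS = ∅ :=
      Finset.eq_empty_of_forall_notMem (fun n hn => Nat.not_lt_zero n (hSS n hn))
    subst hSSe
    simp
  | succ M ih =>
    intro SS hSS
    by_cases hM : M ∈ SS
    swap
    · exact ih SS (fun n hn => by
        have h1 := hSS n hn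
        have h2 : n ≠ M := fun h => hM (h ▸ hn)
        omega)
    classical
    set SS' := SS.erase M with hSS'def
    have hMnot : M ∉ SS' := Finset.notMem_erase M SS
    have hSS' : ∀ n ∈ SS', n < M := by
      intro n hn
      have h1 := Finset.mem_erase.mp hn
      have := hSS n h1.2
      omega
    have hins : SS = insert M SS' := (Finset.insert_erase hM).symm
    set B := ⋂ n ∈ SS', TT μX q n with hB
    have hBmeas : MeasurableSet B :=
      MeasurableSet.biInter (SS' : Set ℕ).to_countable (fun n _ => measurableSet_TT μX q n)
    have hsplit : ⋂ n ∈ SS, TT μX q n = TT μX q M ∩ B := by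
      rw [hins, Finset.set_biInter_insert]
    have hstep : muP μX (TT μX q M ∩ B) = ENNReal.ofReal q * muP μX B := by
      rw [decomp μX hsupp M _ ((measurableSet_TT μX q M).inter hBmeas),
        decomp μX hsupp M B hBmeas, Finset.mul_sum]
      apply Finset.sum_congr rfl
      intro s _
      set sext : ℕ → Bool := fun i => if h : i < M then s ⟨i, h⟩ else false with hsext
      set r : ℕ → ℝ := fun n => q / cpat μX n (fun i : Fin n => sext (i:ℕ)) with hrdef
      have hcc : ∀ n : ℕ, cpat μX n (fun i : Fin n => sext (i:ℕ)) ∈ Set.Icc q 1 :=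
        fun n => cpat_mem μX hq hlb n _
      have hccpos : ∀ n : ℕ, 0 < cpat μX n (fun i : Fin n => sext (i:ℕ)) :=
        fun n => lt_of_lt_of_le hq.1 (hcc n).1
      have hrmem : ∀ n, r n ∈ Set.Icc (0:ℝ) 1 := by
        intro n
        constructor
        · exact div_nonneg hq.1.le (hccpos n).le
        · exact (div_le_one (hccpos n)).mpr (hcc n).1
      have hpf : ∀ (n : ℕ), n ≤ M → ∀ x ∈ patSet s,
          pfun μX n x = cpat μX n (fun i : Fin n => sext (i:ℕ)) := by
        intro n hn x hx
        apply pfun_eq_on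
        intro i
        have hiM : (i:ℕ) < M := lt_of_lt_of_le i.2 hn
        have hxi := hx ⟨i, hiM⟩
        rw [hxi]
        congr 1
        simp only [hsext, dif_pos hiM]
      have hxn1 : ∀ (n : ℕ), n < M → ∀ x ∈ patSet s, (x n = 1 ↔ sext n = true) := by
        intro n hn x hx
        have hxi := hx ⟨n, hn⟩
        simp only at hxi
        rw [hxi]
        simp only [hsext, dif_pos hn]
        rcases Bool.eq_false_or_eq_true (s ⟨n, hn⟩) with h | h <;> rw [h] <;> simp [bval]
      have hseq : (fun i : Fin M => sext (i:ℕ)) = s := by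
        funext i
        simp only [hsext, dif_pos i.2]
      by_cases hok : ∀ n ∈ SS', sext n = true
      · have eqB : B ∩ (patSet s ×ˢ (univ : Set ℝ)) =
            patSet s ×ˢ (⋂ n ∈ SS', {u : ℝ | U n u < r n}) := by
          ext ⟨x, u⟩
          simp only [hB, mem_inter_iff, mem_iInter, mem_prod, mem_univ, and_true,
            mem_setOf_eq, TT]
          constructor
          · rintro ⟨hT, hx⟩
            refine ⟨hx, fun n hn => ?_⟩
            have h2 := (hT n hn).2
            rwa [hpf n (hSS' n hn).le x hx] at h2
          · rintro ⟨hx, hU⟩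
            refine ⟨fun n hn => ⟨?_, ?_⟩, hx⟩
            · exact (hxn1 n (hSS' n hn) x hx).mpr (hok n hn)
            · rw [hpf n (hSS' n hn).le x hx]
              exact hU n hn
        have eqTB : (TT μX q M ∩ B) ∩ (patSet s ×ˢ (univ : Set ℝ)) =
            (patSet s ∩ {x : ℕ → ℝ | x M = 1}) ×ˢ
              ({u : ℝ | U M u < r M} ∩ ⋂ n ∈ SS', {u : ℝ | U n u < r n}) := by
          ext ⟨x, u⟩
          simp only [hB, mem_inter_iff, mem_iInter, mem_prod, mem_univ, and_true,
            mem_setOf_eq, TT]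
          constructor
          · rintro ⟨⟨⟨hx1, hxU⟩, hT⟩, hx⟩
            refine ⟨⟨hx, hx1⟩, ?_, fun n hn => ?_⟩
            · rwa [hpf M le_rfl x hx] at hxU
            · have h2 := (hT n hn).2
              rwa [hpf n (hSS' n hn).le x hx] at h2
          · rintro ⟨⟨hx, hx1⟩, hUM, hU⟩
            refine ⟨⟨⟨hx1, ?_⟩, fun n hn => ⟨?_, ?_⟩⟩, hx⟩
            · rw [hpf M le_rfl x hx]
              exact hUM
            · exact (hxn1 n (hSS' n hn) x hx).mpr (hok n hn)
            · rw [hpf n (hSS' n hn).le x hx]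
              exact hU n hn
        rw [eqB, eqTB, muP, Measure.prod_prod, Measure.prod_prod]
        have hiis : {u : ℝ | U M u < r M} ∩ ⋂ n ∈ SS', {u : ℝ | U n u < r n} =
            ⋂ n ∈ insert M SS', {u : ℝ | U n u < r n} := by
          rw [Finset.set_biInter_insert]
        rw [hiis, nu0_iInter_U_lt (insert M SS') r (fun n _ => hrmem n),
          nu0_iInter_U_lt SS' r (fun n _ => hrmem n),
          Finset.prod_insert hMnot]
        have hcm : μX (patSet s ∩ {x : ℕ → ℝ | x (M:ℕ) = 1}) =
            ENNReal.ofReal (cpat μX M s) * μX (patSet s) := cpat_mul μX M s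
        rw [hcm]
        have hcol : ENNReal.ofReal (cpat μX M s) * ENNReal.ofReal (r M) = ENNReal.ofReal q := by
          have hrM : r M = q / cpat μX M s := by rw [hrdef]; simp only [hseq]
          rw [hrM, ← ENNReal.ofReal_mul (le_of_lt (lt_of_lt_of_le hq.1 (hseq ▸ (hcc M).1)))]
          congr 1
          rw [mul_div_cancel₀]
          exact ne_of_gt (hseq ▸ hccpos M)
        calc ENNReal.ofReal (cpat μX M s) * μX (patSet s) *
              (ENNReal.ofReal (r M) * ∏ n ∈ SS', ENNReal.ofReal (r n))
            = (ENNReal.ofReal (cpat μX M s) * ENNReal.ofReal (r M)) *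
              (μX (patSet s) * ∏ n ∈ SS', ENNReal.ofReal (r n)) := by ring
          _ = ENNReal.ofReal q * (μX (patSet s) * ∏ n ∈ SS', ENNReal.ofReal (r n)) := by
              rw [hcol]
      · have eqB0 : B ∩ (patSet s ×ˢ (univ : Set ℝ)) = ∅ := by
          push_neg at hok
          obtain ⟨n, hn, hfalse⟩ := hok
          rw [eq_empty_iff_forall_notMem]
          rintro ⟨x, u⟩ ⟨hzB, hx, -⟩
          simp only [hB, mem_iInter] at hzB
          have h1 := (hzB n hn).1
          have h2 := (hxn1 n (hSS' n hn) x hx).mp h1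
          rw [h2] at hfalse
          exact hfalse rfl
        have eqTB0 : (TT μX q M ∩ B) ∩ (patSet s ×ˢ (univ : Set ℝ)) = ∅ := by
          rw [eq_empty_iff_forall_notMem]
          rintro z ⟨⟨-, hzB⟩, hz⟩
          rw [eq_empty_iff_forall_notMem] at eqB0
          exact eqB0 z ⟨hzB, hz⟩
        rw [eqB0, eqTB0]
        simp
    rw [hsplit, hstep, ih SS' hSS', hins,
      Finset.card_insert_of_notMem hMnot, pow_succ]
    ring

end Main

section Final

variable (μX : Measure (ℕ → ℝ)) [IsProbabilityMeasure μX] (q : ℝ)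

lemma muP_TT (hsupp : ∀ n, μX {x | x n = 0 ∨ x n = 1} = 1) (hq : q ∈ Set.Ioo (0:ℝ) 1)
    (hlb : ∀ (M : ℕ) (s : Fin M → Bool),
      ENNReal.ofReal q * μX (patSet s) ≤ μX (patSet s ∩ {x | x M = 1}))
    (n : ℕ) : muP μX (TT μX q n) = ENNReal.ofReal q := by
  have h := key_induction μX q hsupp hq hlb (n+1) {n} (by simp)
  simpa using h

lemma iIndep_TT (hsupp : ∀ n, μX {x | x n = 0 ∨ x n = 1} = 1) (hq : q ∈ Set.Ioo (0:ℝ) 1)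
    (hlb : ∀ (M : ℕ) (s : Fin M → Bool),
      ENNReal.ofReal q * μX (patSet s) ≤ μX (patSet s ∩ {x | x M = 1})) :
    iIndep (fun n => MeasurableSpace.generateFrom {TT μX q n}) (muP μX) := by
  apply iIndepSets.iIndep (m := fun n => MeasurableSpace.generateFrom {TT μX q n})
    _ (fun n => {TT μX q n}) _ (fun n => rfl)
  · rw [iIndepSets_iff]
    intro SS f hf
    have hfeq : ∀ n ∈ SS, f n = TT μX q n := fun n hn => mem_singleton_iff.mp (hf n hn)
    have h1 : ⋂ n ∈ SS, f n = ⋂ n ∈ SS, TT μX q n := iInter₂_congr hfeq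
    rw [h1, key_induction μX q hsupp hq hlb (SS.sup id + 1) SS
      (fun n hn => Nat.lt_succ_of_le (Finset.le_sup (f := id) hn))]
    rw [Finset.prod_congr rfl (fun n hn => by
      rw [hfeq n hn, muP_TT μX q hsupp hq hlb n]), Finset.prod_const]
  · intro n
    exact MeasurableSpace.generateFrom_le (fun S hS => by
      rw [mem_singleton_iff.mp hS]; exact measurableSet_TT μX q n)
  · intro n
    rintro S hS T hT -
    rw [mem_singleton_iff.mp hS, mem_singleton_iff.mp hT, inter_self]
    exact rfl

lemma comap_indicator_le (n : ℕ) :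
    MeasurableSpace.comap ((TT μX q n).indicator (fun _ => (1:ℝ))) inferInstance ≤
      MeasurableSpace.generateFrom {TT μX q n} := by
  rintro t ⟨B, hB, rfl⟩
  have hTT : MeasurableSet[MeasurableSpace.generateFrom {TT μX q n}] (TT μX q n) :=
    MeasurableSpace.measurableSet_generateFrom rfl
  by_cases h1 : (1:ℝ) ∈ B <;> by_cases h0 : (0:ℝ) ∈ B
  · have hrw : (TT μX q n).indicator (fun _ => (1:ℝ)) ⁻¹' B = univ := by
      ext z
      simp only [mem_preimage, mem_univ, iff_true]
      by_cases hz : z ∈ TT μX q n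
      · rw [Set.indicator_of_mem hz]; exact h1
      · rw [Set.indicator_of_notMem hz]; exact h0
    rw [hrw]
    exact MeasurableSet.univ
  · have hrw : (TT μX q n).indicator (fun _ => (1:ℝ)) ⁻¹' B = TT μX q n := by
      ext z
      simp only [mem_preimage]
      by_cases hz : z ∈ TT μX q n
      · rw [Set.indicator_of_mem hz]; simp [hz, h1]
      · rw [Set.indicator_of_notMem hz]; simp [hz, h0]
    rw [hrw]
    exact hTT
  · have hrw : (TT μX q n).indicator (fun _ => (1:ℝ)) ⁻¹' B = (TT μX q n)ᶜ := by
      ext z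
      simp only [mem_preimage, mem_compl_iff]
      by_cases hz : z ∈ TT μX q n
      · rw [Set.indicator_of_mem hz]; simp [hz, h1]
      · rw [Set.indicator_of_notMem hz]; simp [hz, h0]
    rw [hrw]
    exact hTT.compl
  · have hrw : (TT μX q n).indicator (fun _ => (1:ℝ)) ⁻¹' B = ∅ := by
      ext z
      simp only [mem_preimage, mem_empty_iff_false, iff_false]
      by_cases hz : z ∈ TT μX q n
      · rw [Set.indicator_of_mem hz]; exact h1
      · rw [Set.indicator_of_notMem hz]; exact h0
    rw [hrw]
    exact @MeasurableSet.empty _ (MeasurableSpace.generateFrom {TT μX q n})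

lemma iIndepFun_Y' (hsupp : ∀ n, μX {x | x n = 0 ∨ x n = 1} = 1) (hq : q ∈ Set.Ioo (0:ℝ) 1)
    (hlb : ∀ (M : ℕ) (s : Fin M → Bool),
      ENNReal.ofReal q * μX (patSet s) ≤ μX (patSet s ∩ {x | x M = 1})) :
    iIndepFun
      (fun n => (TT μX q n).indicator (fun _ => (1:ℝ))) (muP μX) := by
  rw [iIndepFun_iff_iIndep]
  have hgen := iIndep_TT μX q hsupp hq hlb
  rw [iIndep_iff] at hgen ⊢
  intro SS f hf
  exact hgen SS (fun n hn => comap_indicator_le μX q n _ (hf n hn))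

end Final

lemma condexp_pattern_bound {Ω : Type*} [MeasurableSpace Ω] (μ : Measure Ω)
    [IsProbabilityMeasure μ] (X : ℕ → Ω → ℝ) (hXmeas : ∀ n, Measurable (X n))
    {q : ℝ} (hq0 : 0 ≤ q) (M : ℕ)
    (hcondM : ∀ᵐ ω ∂μ,
      q ≤ (μ[Set.indicator {ω' | X M ω' = 1} (fun _ => (1 : ℝ)) |
            MeasurableSpace.comap (fun ω' (i : Fin M) => X i ω') inferInstance]) ω)
    (s : Fin M → Bool) :
    ENNReal.ofReal q * μ {ω | ∀ i : Fin M, X i ω = bval (s i)} ≤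
      μ ({ω | ∀ i : Fin M, X i ω = bval (s i)} ∩ {ω | X M ω = 1}) := by
  set G : Set Ω := {ω | ∀ i : Fin M, X i ω = bval (s i)} with hGdef
  have hXM1 : MeasurableSet {ω | X M ω = 1} := hXmeas M (measurableSet_singleton 1)
  have hle : MeasurableSpace.comap (fun ω' (i : Fin M) => X i ω') inferInstance ≤
      ‹MeasurableSpace Ω› :=
    (measurable_pi_lambda (fun ω (i : Fin M) => X (i:ℕ) ω) (fun i => hXmeas i)).comap_le
  haveI hfinτ : IsFiniteMeasure (μ.trim hle) :=
    ⟨by rw [trim_measurableSet_eq hle MeasurableSet.univ]; exact measure_lt_top μ _⟩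
  have hGsub : MeasurableSet[MeasurableSpace.comap (fun ω' (i : Fin M) => X i ω')
      inferInstance] G := by
    refine ⟨{v : Fin M → ℝ | ∀ i, v i = bval (s i)}, ?_, rfl⟩
    have hrw : {v : Fin M → ℝ | ∀ i, v i = bval (s i)}
        = ⋂ i, (fun v : Fin M → ℝ => v i) ⁻¹' {bval (s i)} := by
      ext v; simp
    rw [hrw]
    exact MeasurableSet.iInter fun i => (measurable_pi_apply i) (measurableSet_singleton _)
  set f : Ω → ℝ := Set.indicator {ω' | X M ω' = 1} (fun _ => (1:ℝ)) with hf
  have hint : Integrable f μ := (integrable_const (1:ℝ)).indicator hXM1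
  have h1 : ∫ ω in G, f ω ∂μ = (μ (G ∩ {ω | X M ω = 1})).toReal := by
    rw [hf, setIntegral_indicator hXM1, setIntegral_const, smul_eq_mul, mul_one, measureReal_def]
  have h3 : q * (μ G).toReal ≤ (μ (G ∩ {ω | X M ω = 1})).toReal := by
    calc q * (μ G).toReal = ∫ _ω in G, q ∂μ := by
          rw [setIntegral_const, smul_eq_mul, mul_comm, measureReal_def]
      _ ≤ ∫ ω in G, (μ[f|MeasurableSpace.comap (fun ω' (i : Fin M) => X i ω')
            inferInstance]) ω ∂μ :=
          integral_mono_ae (integrable_const q) integrable_condExp.restrict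
            (ae_restrict_of_ae hcondM)
      _ = ∫ ω in G, f ω ∂μ := setIntegral_condExp hle hint hGsub
      _ = (μ (G ∩ {ω | X M ω = 1})).toReal := h1
  calc ENNReal.ofReal q * μ G = ENNReal.ofReal (q * (μ G).toReal) := by
        rw [ENNReal.ofReal_mul hq0, ENNReal.ofReal_toReal (measure_ne_top μ G)]
    _ ≤ ENNReal.ofReal ((μ (G ∩ {ω | X M ω = 1})).toReal) := ENNReal.ofReal_le_ofReal h3
    _ = μ (G ∩ {ω | X M ω = 1}) := ENNReal.ofReal_toReal (measure_ne_top μ _)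

end Stmt4



open MeasureTheory ProbabilityTheory

/-- Bernoulli variables whose conditional probability of success given the
past is at least `q` dominate, on a possibly enlarged probability space, an i.i.d.
Bernoulli(`q`) family. -/
theorem stmt_4 {Ω : Type*} [MeasurableSpace Ω] (μ : Measure Ω) [IsProbabilityMeasure μ]
    (X : ℕ → Ω → ℝ) (hXmeas : ∀ n, Measurable (X n))
    (hXval : ∀ n ω, X n ω = 0 ∨ X n ω = 1)
    (q : ℝ) (hq : q ∈ Set.Ioo (0 : ℝ) 1)
    (hcond : ∀ n, ∀ᵐ ω ∂μ,
      q ≤ (μ[Set.indicator {ω' | X n ω' = 1} (fun _ => (1 : ℝ)) |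
            MeasurableSpace.comap (fun ω' (i : Fin n) => X i ω') inferInstance]) ω) :
    ∃ (Ω' : Type) (m' : MeasurableSpace Ω') (μ' : Measure Ω'),
      IsProbabilityMeasure μ' ∧
      ∃ (Y Y' : ℕ → Ω' → ℝ),
        (∀ n, Measurable (Y n)) ∧ (∀ n, Measurable (Y' n)) ∧
        -- `Y` is a copy of `X`: the joint distributions coincide
        Measure.map (fun ω (n : ℕ) => X n ω) μ = Measure.map (fun ω (n : ℕ) => Y n ω) μ' ∧
        -- `Y'` is an i.i.d. Bernoulli(q) family
        iIndepFun Y' μ' ∧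
        (∀ n, ∀ ω, Y' n ω = 0 ∨ Y' n ω = 1) ∧
        (∀ n, μ' {ω | Y' n ω = 1} = ENNReal.ofReal q) ∧
        -- domination
        (∀ n, ∀ᵐ ω ∂μ', Y' n ω ≤ Y n ω) := by
  classical
  open Stmt4 Set in
  set pathX : Ω → (ℕ → ℝ) := fun ω n => X n ω with hpathX
  have hpath : Measurable pathX := measurable_pi_lambda _ (fun n => hXmeas n)
  set μX : Measure (ℕ → ℝ) := Measure.map pathX μ with hμX
  haveI : IsProbabilityMeasure μX := Measure.isProbabilityMeasure_map hpath.aemeasurable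
  have hmeasA : ∀ n : ℕ, MeasurableSet {x : ℕ → ℝ | x n = 0 ∨ x n = 1} := by
    intro n
    have hrw : {x : ℕ → ℝ | x n = 0 ∨ x n = 1}
        = (fun x : ℕ → ℝ => x n) ⁻¹' {0} ∪ (fun x : ℕ → ℝ => x n) ⁻¹' {1} := by
      ext x; simp
    rw [hrw]
    exact ((measurable_pi_apply n) (measurableSet_singleton _)).union
      ((measurable_pi_apply n) (measurableSet_singleton _))
  have hsupp : ∀ n, μX {x | x n = 0 ∨ x n = 1} = 1 := by
    intro n
    rw [hμX, Measure.map_apply hpath (hmeasA n)]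
    have hrw : pathX ⁻¹' {x | x n = 0 ∨ x n = 1} = Set.univ := by
      ext ω; simpa using hXval n ω
    rw [hrw, measure_univ]
  have hlb : ∀ (M : ℕ) (s : Fin M → Bool),
      ENNReal.ofReal q * μX (patSet s) ≤ μX (patSet s ∩ {x | x M = 1}) := by
    intro M s
    have hx1meas : MeasurableSet {x : ℕ → ℝ | x M = 1} :=
      (measurable_pi_apply M) (measurableSet_singleton 1)
    rw [hμX, Measure.map_apply hpath (measurableSet_patSet s),
      Measure.map_apply hpath ((measurableSet_patSet s).inter hx1meas)]
    exact condexp_pattern_bound μ X hXmeas hq.1.le M (hcond M) s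
  refine ⟨(ℕ → ℝ) × ℝ, inferInstance, muP μX, inferInstance,
    (fun n z => z.1 n), (fun n => (TT μX q n).indicator (fun _ => (1:ℝ))),
    (fun n => (measurable_pi_apply n).comp measurable_fst),
    (fun n => measurable_const.indicator (measurableSet_TT μX q n)),
    ?_, iIndepFun_Y' μX q hsupp hq hlb, ?_, ?_, ?_⟩
  · show Measure.map (fun ω (n : ℕ) => X n ω) μ
        = Measure.map (fun z : (ℕ → ℝ) × ℝ => fun n : ℕ => z.1 n) (muP μX)
    have hrw : (fun z : (ℕ → ℝ) × ℝ => fun n : ℕ => z.1 n)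
        = (Prod.fst : (ℕ → ℝ) × ℝ → (ℕ → ℝ)) := rfl
    rw [hrw, muP, Measure.map_fst_prod, measure_univ, one_smul, hμX]
  · intro n z
    dsimp only
    by_cases hz : z ∈ TT μX q n
    · right; rw [Set.indicator_of_mem hz]
    · left; rw [Set.indicator_of_notMem hz]
  · intro n
    have hset : {z | (TT μX q n).indicator (fun _ => (1:ℝ)) z = 1} = TT μX q n := by
      ext z
      simp only [mem_setOf_eq, Set.indicator_apply]
      split_ifs with h <;> simp [h]
    show muP μX {z | (TT μX q n).indicator (fun _ => (1:ℝ)) z = 1} = ENNReal.ofReal q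
    rw [hset]
    exact muP_TT μX q hsupp hq hlb n
  · intro n
    have hconull : muP μX ({z : (ℕ → ℝ) × ℝ | z.1 n = 0 ∨ z.1 n = 1}ᶜ) = 0 := by
      have hrw : ({z : (ℕ → ℝ) × ℝ | z.1 n = 0 ∨ z.1 n = 1}ᶜ)
          = ({x : ℕ → ℝ | x n = 0 ∨ x n = 1}ᶜ) ×ˢ (Set.univ : Set ℝ) := by
        ext z; simp
      rw [hrw, muP, Measure.prod_prod,
        measure_compl (hmeasA n) (measure_ne_top μX _), hsupp n, measure_univ]
      simp
    rw [ae_iff]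
    apply measure_mono_null _ hconull
    intro z hz
    simp only [mem_setOf_eq, not_le] at hz
    simp only [mem_compl_iff, mem_setOf_eq]
    intro hor
    by_cases hzT : z ∈ TT μX q n
    · rw [Set.indicator_of_mem hzT] at hz
      have := hzT.1
      rw [this] at hz
      exact lt_irrefl _ hz
    · rw [Set.indicator_of_notMem hzT] at hz
      rcases hor with h | h <;> rw [h] at hz <;> norm_num at hz
end

section
/- Consider long range percolation on ℤ with translation-invariant edge probabilities b_k = P({x, x+k} open) for k ≥ 1, edges open independently. If ∑_{k≥1} k·b_k < ∞ then the probability that 0 is a cut-point (no open edge {x,y} with x ≤ 0 < y) equals ∏_{x ≤ 0 < y} (1 − b_{y−x}) and is strictly positive. -/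
open MeasureTheory ProbabilityTheory
open scoped ENNReal

open Filter
open scoped Topology

namespace Stmt7Aux


lemma one_sub_add_le (x y : ℝ≥0∞) : 1 - (x + y) ≤ (1 - x) * (1 - y) := by
  rcases le_or_gt 1 x with hx | hx
  · rw [tsub_eq_zero_of_le (le_add_right hx)]; exact zero_le
  rcases le_or_gt 1 y with hy | hy
  · rw [tsub_eq_zero_of_le (le_add_left hy)]; exact zero_le
  rw [tsub_le_iff_right]
  calc (1 : ℝ≥0∞) = (1 - x) * ((1 - y) + y) + x := by
        rw [tsub_add_cancel_of_le hy.le, mul_one, tsub_add_cancel_of_le hx.le]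
    _ = (1 - x) * (1 - y) + (1 - x) * y + x := by rw [mul_add]
    _ ≤ (1 - x) * (1 - y) + y + x := by
        gcongr
        exact mul_le_of_le_one_left' tsub_le_self
    _ = (1 - x) * (1 - y) + (x + y) := by ring

lemma prod_one_sub_ge {ι : Type*} (c : ι → ℝ≥0∞) (F : Finset ι) :
    1 - ∑ i ∈ F, c i ≤ ∏ i ∈ F, (1 - c i) := by
  classical
  induction F using Finset.induction with
  | empty => simp
  | insert a G hnot ih =>
    rw [Finset.sum_insert hnot, Finset.prod_insert hnot]
    calc 1 - (c a + ∑ i ∈ G, c i) ≤ (1 - c a) * (1 - ∑ i ∈ G, c i) :=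
          one_sub_add_le _ _
      _ ≤ (1 - c a) * ∏ i ∈ G, (1 - c i) := by gcongr

lemma hasProd_iInf {ι : Type*} [DecidableEq ι] (f : ι → ℝ≥0∞) (hf : ∀ i, f i ≤ 1) :
    HasProd f (⨅ F : Finset ι, ∏ i ∈ F, f i) := by
  have anti : Antitone (fun F : Finset ι => ∏ i ∈ F, f i) := by
    intro F G hFG
    show ∏ i ∈ G, f i ≤ ∏ i ∈ F, f i
    rw [← Finset.prod_sdiff hFG]
    exact mul_le_of_le_one_left' (Finset.prod_le_one' fun i _ => hf i)
  exact tendsto_atTop_iInf anti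

lemma iInf_prod_pos {ι : Type*} (c : ι → ℝ≥0∞) (hc1 : ∀ i, c i < 1)
    (hsum : ∑' i, c i ≠ ∞) : 0 < ⨅ F : Finset ι, ∏ i ∈ F, (1 - c i) := by
  classical
  obtain ⟨T, hT⟩ : ∃ T : Finset ι, ∑' i : {x // x ∉ T}, c i < 1/2 :=
    ((ENNReal.tendsto_tsum_compl_atTop_zero hsum).eventually_lt_const
      (by norm_num : (0:ℝ≥0∞) < 1/2)).exists
  set L := ∏ i ∈ T, (1 - c i) with hL_def
  have hL : 0 < L :=
    CanonicallyOrderedAdd.prod_pos.mpr fun i _ => tsub_pos_iff_lt.mpr (hc1 i)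
  have key : ∀ F : Finset ι, L * (1/2) ≤ ∏ i ∈ F, (1 - c i) := by
    intro F
    have hsplit : ∏ i ∈ F, (1 - c i)
        = (∏ i ∈ F ∩ T, (1 - c i)) * ∏ i ∈ F \ T, (1 - c i) := by
      rw [Finset.prod_inter_mul_prod_diff]
    have h1 : L ≤ ∏ i ∈ F ∩ T, (1 - c i) := by
      rw [hL_def, ← Finset.prod_sdiff (Finset.inter_subset_right (s₁ := F))]
      exact mul_le_of_le_one_left' (Finset.prod_le_one' fun i _ => tsub_le_self)
    have h2 : (1/2 : ℝ≥0∞) ≤ ∏ i ∈ F \ T, (1 - c i) := by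
      refine le_trans ?_ (prod_one_sub_ge c _)
      have hs : ∑ i ∈ F \ T, c i ≤ ∑' i : {x // x ∉ T}, c i := by
        rw [show (∑' i : {x // x ∉ T}, c i) = ∑' i, Set.indicator {x | x ∉ T} c i from tsum_subtype {x | x ∉ T} c]
        calc ∑ i ∈ F \ T, c i = ∑ i ∈ F \ T, Set.indicator {x | x ∉ T} c i :=
              Finset.sum_congr rfl fun i hi =>
                (Set.indicator_of_mem (by simpa using (Finset.mem_sdiff.mp hi).2) c).symm
          _ ≤ _ := ENNReal.sum_le_tsum _
      calc (1/2 : ℝ≥0∞) = 1 - 1/2 := by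
            rw [ENNReal.sub_half ENNReal.one_ne_top]
        _ ≤ 1 - ∑ i ∈ F \ T, c i := tsub_le_tsub_left (hs.trans hT.le) 1
    calc L * (1/2) ≤ (∏ i ∈ F ∩ T, (1 - c i)) * ∏ i ∈ F \ T, (1 - c i) :=
          mul_le_mul' h1 h2
      _ = _ := hsplit.symm
  refine lt_of_lt_of_le ?_ (le_iInf key)
  exact ENNReal.mul_pos hL.ne' (by norm_num)



lemma tsum_S_ne_top (b : ℕ → ℝ≥0∞) (hsum : ∑' k : ℕ, (k : ℝ≥0∞) * b k ≠ ∞) :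
    ∑' p : {q : ℤ × ℤ // q.1 ≤ 0 ∧ 0 < q.2}, b ((p.1.2 - p.1.1).natAbs) ≠ ∞ := by
  classical
  set f : ℕ × ℕ → ℝ≥0∞ := fun q => if q.2 < q.1 then b q.1 else 0 with hf
  have hle : ∑' p : {q : ℤ × ℤ // q.1 ≤ 0 ∧ 0 < q.2}, b ((p.1.2 - p.1.1).natAbs)
      ≤ ∑' q : ℕ × ℕ, f q := by
    refine ENNReal.summable.tsum_le_tsum_of_inj
      (fun p : {q : ℤ × ℤ // q.1 ≤ 0 ∧ 0 < q.2} => ((p.1.2 - p.1.1).natAbs, p.1.1.natAbs))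
      ?_ (fun _ _ => zero_le) ?_ ENNReal.summable
    · rintro ⟨⟨x, y⟩, hx, hy⟩ ⟨⟨x', y'⟩, hx', hy'⟩ h
      simp only [Prod.mk.injEq] at h
      have hxy : x = x' ∧ y = y' := by omega
      simp [Subtype.ext_iff, Prod.ext_iff, hxy.1, hxy.2]
    · rintro ⟨⟨x, y⟩, hx, hy⟩
      have h : x.natAbs < (y - x).natAbs := by omega
      simp [hf, h]
  have heq : ∑' q : ℕ × ℕ, f q = ∑' k : ℕ, (k : ℝ≥0∞) * b k := by
    rw [ENNReal.tsum_prod']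
    refine tsum_congr fun k => ?_
    have h0 : ∀ a ∉ Finset.range k, f (k, a) = 0 := by
      intro a ha
      simp only [hf, ite_eq_right_iff]
      intro h
      exact absurd (Finset.mem_range.mpr h) ha
    rw [tsum_eq_sum h0]
    have : ∑ a ∈ Finset.range k, f (k, a) = ∑ _a ∈ Finset.range k, b k :=
      Finset.sum_congr rfl fun a ha => by simp [hf, Finset.mem_range.mp ha]
    rw [this, Finset.sum_const, Finset.card_range, nsmul_eq_mul]
  exact fun htop => hsum (top_le_iff.mp (heq ▸ htop ▸ hle))

end Stmt7Aux

open Stmt7Aux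

/-- in long range percolation on `ℤ` with `∑ k·b_k < ∞`, the probability
that `0` is a cut-point equals the infinite product `∏_{x ≤ 0 < y} (1 - b_{y-x})`
and is strictly positive. -/
theorem stmt_7 {Ω : Type*} [MeasurableSpace Ω] (μ : Measure Ω) [IsProbabilityMeasure μ]
    (b : ℕ → ℝ≥0∞) (hb1 : ∀ k, b k < 1)
    (hsum : ∑' k : ℕ, (k : ℝ≥0∞) * b k < ⊤)
    (w : Sym2 ℤ → Ω → Bool) (hmeas : ∀ e, Measurable (w e))
    (hindep : iIndepFun w μ)
    (hopen : ∀ x y : ℤ, x ≠ y → μ {ω | w (Sym2.mk x y) ω = true} = b (y - x).natAbs) :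
    μ {ω | ∀ x y : ℤ, x ≤ 0 → 0 < y → w (Sym2.mk x y) ω = false} =
      ∏' p : {q : ℤ × ℤ // q.1 ≤ 0 ∧ 0 < q.2},
        (1 - b ((p : ℤ × ℤ).2 - (p : ℤ × ℤ).1).natAbs) ∧
    0 < μ {ω | ∀ x y : ℤ, x ≤ 0 → 0 < y → w (Sym2.mk x y) ω = false} := by
  classical
  -- the family of events
  let A : {q : ℤ × ℤ // q.1 ≤ 0 ∧ 0 < q.2} → Set Ω :=
    fun p => w (Sym2.mk p.1.1 p.1.2) ⁻¹' {false}
  have hAmeas : ∀ p, MeasurableSet (A p) := fun p => hmeas _ (measurableSet_singleton false)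
  have hAval : ∀ p, μ (A p) = 1 - b ((p.1.2 - p.1.1).natAbs) := by
    rintro ⟨⟨x, y⟩, hx, hy⟩
    have hxy : x ≠ y := by omega
    have hc : A ⟨(x, y), hx, hy⟩ = (w (Sym2.mk x y) ⁻¹' {true})ᶜ := by
      ext ω; simp [A]
    rw [hc, measure_compl (hmeas _ (measurableSet_singleton true)) (measure_ne_top μ _),
      measure_univ]
    congr 1
    exact hopen x y hxy
  have hedge : Function.Injective
      fun p : {q : ℤ × ℤ // q.1 ≤ 0 ∧ 0 < q.2} => Sym2.mk p.1.1 p.1.2 := by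
    rintro ⟨⟨x, y⟩, hx, hy⟩ ⟨⟨x', y'⟩, hx', hy'⟩ h
    simp only [Sym2.eq_iff, Prod.ext_iff, Prod.swap_prod_mk] at h
    have : x = x' ∧ y = y' := by
      rcases h with ⟨h1, h2⟩ | ⟨h1, h2⟩ <;> constructor <;> omega
    simp [Subtype.ext_iff, Prod.ext_iff, this.1, this.2]
  -- an enumeration of the index set
  have hinf : Infinite {q : ℤ × ℤ // q.1 ≤ 0 ∧ 0 < q.2} := by
    refine Infinite.of_injective
      (fun n : ℕ => ⟨(0, (n : ℤ) + 1), le_refl 0, by positivity⟩) ?_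
    intro a c h
    simpa [Subtype.ext_iff, Prod.ext_iff] using h
  obtain ⟨d⟩ := nonempty_denumerable {q : ℤ × ℤ // q.1 ≤ 0 ∧ 0 < q.2}
  let e : ℕ ≃ {q : ℤ × ℤ // q.1 ≤ 0 ∧ 0 < q.2} := (Denumerable.eqv _).symm
  -- finite independence
  have key : ∀ n : ℕ, μ (⋂ i ∈ Finset.range n, A (e i)) = ∏ i ∈ Finset.range n, μ (A (e i)) := by
    intro n
    have hinj : ∀ i ∈ Finset.range n, ∀ j ∈ Finset.range n,
        Sym2.mk (e i).1.1 (e i).1.2 = Sym2.mk (e j).1.1 (e j).1.2 → i = j :=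
      fun i _ j _ h => e.injective (hedge h)
    have him : (⋂ i ∈ Finset.range n, A (e i))
        = ⋂ s ∈ (Finset.range n).image (fun i => Sym2.mk (e i).1.1 (e i).1.2), w s ⁻¹' {false} := by
      rw [Finset.set_biInter_finset_image]
    rw [him,
      hindep.meas_biInter (fun s _ => ⟨{false}, measurableSet_singleton false, rfl⟩),
      Finset.prod_image hinj]
  -- the event as a countable intersection
  have hE : {ω | ∀ x y : ℤ, x ≤ 0 → 0 < y → w (Sym2.mk x y) ω = false}
      = ⋂ n, ⋂ i ∈ Finset.range n, A (e i) := by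
    ext ω
    simp only [Set.mem_setOf_eq, Set.mem_iInter, A, Set.mem_preimage,
      Set.mem_singleton_iff, Finset.mem_range]
    constructor
    · intro h n i _
      exact h (e i).1.1 (e i).1.2 (e i).2.1 (e i).2.2
    · intro h x y hx hy
      obtain ⟨i, hi⟩ := e.surjective ⟨(x, y), hx, hy⟩
      have := h (i + 1) i (lt_add_one i)
      rw [hi] at this
      exact this
  -- limits
  have hmono : Antitone fun n => ⋂ i ∈ Finset.range n, A (e i) := by
    intro n m hnm ω hω
    simp only [Set.mem_iInter, Finset.mem_range] at hω ⊢
    exact fun i hi => hω i (lt_of_lt_of_le hi hnm)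
  have htends : Tendsto (fun n => μ (⋂ i ∈ Finset.range n, A (e i))) atTop
      (𝓝 (μ (⋂ n, ⋂ i ∈ Finset.range n, A (e i)))) :=
    tendsto_measure_iInter_atTop
      (fun n => ((Finset.range n).measurableSet_biInter fun i _ => hAmeas _).nullMeasurableSet)
      hmono ⟨0, measure_ne_top μ _⟩
  let c : ℕ → ℝ≥0∞ := fun i => b (((e i).1.2 - (e i).1.1).natAbs)
  have hprod : HasProd (fun i => 1 - c i) (⨅ F : Finset ℕ, ∏ i ∈ F, (1 - c i)) :=
    hasProd_iInf _ fun i => tsub_le_self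
  have hPpos : 0 < ⨅ F : Finset ℕ, ∏ i ∈ F, (1 - c i) := by
    refine iInf_prod_pos c (fun i => hb1 _) ?_
    have := e.tsum_eq (fun p : {q : ℤ × ℤ // q.1 ≤ 0 ∧ 0 < q.2} =>
      b ((p.1.2 - p.1.1).natAbs))
    rw [show (∑' i, c i) = _ from this]
    exact tsum_S_ne_top b hsum.ne
  have hμn : (fun n => μ (⋂ i ∈ Finset.range n, A (e i)))
      = fun n => ∏ i ∈ Finset.range n, (1 - c i) := by
    funext n
    rw [key n]
    exact Finset.prod_congr rfl fun i _ => hAval (e i)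
  have hμE : μ {ω | ∀ x y : ℤ, x ≤ 0 → 0 < y → w (Sym2.mk x y) ω = false}
      = ⨅ F : Finset ℕ, ∏ i ∈ F, (1 - c i) := by
    rw [hE]
    exact tendsto_nhds_unique (hμn ▸ htends) hprod.tendsto_prod_nat
  constructor
  · rw [hμE, hprod.tprod_eq.symm]
    exact (e.tprod_eq fun p : {q : ℤ × ℤ // q.1 ≤ 0 ∧ 0 < q.2} =>
      1 - b ((p.1.2 - p.1.1).natAbs))
  · rw [hμE]; exact hPpos
end

section
/- Let p ∈ [0,1], v > 0, T > 0 with p·v > 0 and define δ := (1 − p)·e^{−p·v·T}·(1 − p·(1 − e^{−v·T})/(1 − e^{−p·v·T})). Then 1 − δ ≤ p·v·T + p + 1/(v·T). -/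
/-- bound `1 − δ ≤ p·v·T + p + 1/(v·T)` for the edge-closure probability
lower bound `δ`. -/
theorem stmt_12 (p v T : ℝ) (hp : p ∈ Set.Icc (0 : ℝ) 1) (hv : 0 < v) (hT : 0 < T)
    (hpv : 0 < p * v) :
    1 - (1 - p) * Real.exp (-(p * v * T)) *
        (1 - p * (1 - Real.exp (-(v * T))) / (1 - Real.exp (-(p * v * T)))) ≤
      p * v * T + p + 1 / (v * T) := by
  obtain ⟨hp0, hp1⟩ := hp
  have hpp : 0 < p := by nlinarith
  have hb : 0 < v * T := mul_pos hv hT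
  have ha : 0 < p * v * T := mul_pos hpv hT
  set a := p * v * T with ha'
  set b := v * T with hb'
  have hab : a = p * b := by rw [ha', hb']; ring
  have hE : 0 < Real.exp (-a) := Real.exp_pos _
  have hF : 0 < Real.exp (-b) := Real.exp_pos _
  have hF1 : Real.exp (-b) ≤ 1 := by
    apply Real.exp_le_one_iff.mpr; linarith
  have hD : 0 < 1 - Real.exp (-a) := by
    have : Real.exp (-a) < 1 := Real.exp_lt_one_iff.mpr (by linarith)
    linarith
  have hED : a * Real.exp (-a) ≤ 1 - Real.exp (-a) := by
    have h := Real.add_one_le_exp a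
    have h2 : (a + 1) * Real.exp (-a) ≤ Real.exp a * Real.exp (-a) :=
      mul_le_mul_of_nonneg_right h hE.le
    rw [← Real.exp_add] at h2
    simp at h2
    nlinarith
  have hQ : p * (1 - Real.exp (-b)) / (1 - Real.exp (-a)) ≤ 1 / (b * Real.exp (-a)) := by
    rw [div_le_div_iff₀ hD (by positivity)]
    have key : p * (1 - Real.exp (-b)) * (b * Real.exp (-a)) ≤ a * Real.exp (-a) := by
      have haE : a * Real.exp (-a) = p * b * Real.exp (-a) := by rw [hab]
      nlinarith [mul_nonneg (mul_nonneg hpp.le hF.le) (mul_nonneg hb.le hE.le)]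
    nlinarith
  have hEa : 1 - a ≤ Real.exp (-a) := by linarith [Real.add_one_le_exp (-a)]
  have h1 : (1 - p) * Real.exp (-a) * (1 - 1 / (b * Real.exp (-a))) ≤
      (1 - p) * Real.exp (-a) * (1 - p * (1 - Real.exp (-b)) / (1 - Real.exp (-a))) := by
    exact mul_le_mul_of_nonneg_left (by linarith) (mul_nonneg (by linarith) hE.le)
  have h2 : (1 - p) * Real.exp (-a) * (1 - 1 / (b * Real.exp (-a))) =
      (1 - p) * Real.exp (-a) - (1 - p) / b := by
    field_simp
  have h3 : (1 - p) * (1 - a) ≤ (1 - p) * Real.exp (-a) :=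
    mul_le_mul_of_nonneg_left hEa (by linarith)
  have h4 : (1 - p) / b ≤ 1 / b := by
    gcongr
    linarith
  nlinarith [mul_nonneg hpp.le ha.le, h1, h2, h3, h4]
end
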